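/- arXiv:2402.04530 — 8 statements merged into one kernel-verified Lean document; each statement's English description precedes it below -/
import Mathlib

section
/- Let X be an n×p real matrix of rank p and let P be an n×n symmetric positive definite matrix (so XᵀPX and XᵀX are invertible). Then (XᵀPX)⁻¹XᵀP²X(XᵀPX)⁻¹ − (XᵀX)⁻¹ is positive semidefinite. Consequently, for any η² > 0 and any Loewner-nondecreasing function Φ, the maximum over the class {C positive semidefinite : C ⪯ η²·I_n} of Φ((XᵀPX)⁻¹XᵀPCPX(XᵀPX)⁻¹) equals Φ(η²·(XᵀPX)⁻¹XᵀP²X(XᵀPX)⁻¹), and this maximum is at least Φ(η²·(XᵀX)⁻¹), its value at P = I_n; i.e., ordinary least squares is minimax among generalized least squares estimates. -/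
/-!
Write `A = XᵀPX` and `K = PXA⁻¹`. The GLS covariance is `KᵀCK`, so it is Loewner-monotone in `C`
and its maximum over `C ⪯ η²I` is attained at `C = η²I`. Since `XᵀK = I`, expanding
`(K - X(XᵀX)⁻¹)ᵀ(K - X(XᵀX)⁻¹)` gives `KᵀK - (XᵀX)⁻¹`, which is therefore positive semidefinite.
-/

open Matrix

namespace Matrix

variable {m n : Type*} [Fintype n]

theorem mulVec_injective_of_rank_eq_card {K : Type*} [Field K] {A : Matrix m n K}
    (h : A.rank = Fintype.card n) : Function.Injective A.mulVec := by
  rw [mulVec_injective_iff, linearIndependent_iff_card_eq_finrank_span, ← h,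
    rank_eq_finrank_span_cols]
  rfl

variable [Fintype m]

theorem PosSemidef.transpose_mul_mul_same {M : Matrix m m ℝ} (hM : M.PosSemidef)
    (B : Matrix m n ℝ) : (Bᵀ * M * B).PosSemidef := by
  simpa using hM.conjTranspose_mul_mul_same B

theorem PosDef.transpose_mul_mul_same {M : Matrix m m ℝ} (hM : M.PosDef) {B : Matrix m n ℝ}
    (hB : Function.Injective B.mulVec) : (Bᵀ * M * B).PosDef := by
  simpa using hM.conjTranspose_mul_mul_same hB

variable [DecidableEq n]

theorem posSemidef_transpose_mul_self_sub_inv {X K : Matrix m n ℝ} (hK : Xᵀ * K = 1)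
    (hX : IsUnit (Xᵀ * X).det) : (Kᵀ * K - (Xᵀ * X)⁻¹).PosSemidef := by
  have hKX : Kᵀ * X = 1 := by simpa using congrArg transpose hK
  have hsymm : ((Xᵀ * X)⁻¹)ᵀ = (Xᵀ * X)⁻¹ := by
    rw [transpose_nonsing_inv, transpose_mul, transpose_transpose]
  have hgram : (K - X * (Xᵀ * X)⁻¹)ᵀ * (K - X * (Xᵀ * X)⁻¹) = Kᵀ * K - (Xᵀ * X)⁻¹ := by
    rw [transpose_sub, transpose_mul, hsymm, Matrix.sub_mul, Matrix.mul_sub, Matrix.mul_sub,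
      ← Matrix.mul_assoc Kᵀ X, hKX, Matrix.mul_assoc _ Xᵀ K, hK, Matrix.mul_assoc _ Xᵀ,
      ← Matrix.mul_assoc Xᵀ X, mul_nonsing_inv _ hX]
    simp only [Matrix.one_mul, Matrix.mul_one]
    abel
  simpa only [conjTranspose_eq_transpose_of_trivial, hgram] using
    posSemidef_conjTranspose_mul_self (K - X * (Xᵀ * X)⁻¹)

noncomputable def glsCovariance (X : Matrix m n ℝ) (P C : Matrix m m ℝ) : Matrix n n ℝ :=
  (Xᵀ * P * X)⁻¹ * (Xᵀ * P * C * P * X) * (Xᵀ * P * X)⁻¹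

variable {X : Matrix m n ℝ} {P : Matrix m m ℝ}

theorem glsCovariance_eq_transpose_mul_mul (hP : P.IsSymm) (C : Matrix m m ℝ) :
    glsCovariance X P C = (P * X * (Xᵀ * P * X)⁻¹)ᵀ * C * (P * X * (Xᵀ * P * X)⁻¹) := by
  have hsymm : ((Xᵀ * P * X)⁻¹)ᵀ = (Xᵀ * P * X)⁻¹ := by
    rw [transpose_nonsing_inv, transpose_mul, transpose_mul, transpose_transpose, hP.eq,
      Matrix.mul_assoc]
  rw [glsCovariance, transpose_mul, transpose_mul, hsymm, hP.eq]
  simp only [Matrix.mul_assoc]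

theorem glsCovariance_posSemidef (hP : P.IsSymm) {C : Matrix m m ℝ} (hC : C.PosSemidef) :
    (glsCovariance X P C).PosSemidef := by
  rw [glsCovariance_eq_transpose_mul_mul hP]
  exact hC.transpose_mul_mul_same _

theorem glsCovariance_sub_posSemidef (hP : P.IsSymm) {C D : Matrix m m ℝ}
    (hCD : (D - C).PosSemidef) : (glsCovariance X P D - glsCovariance X P C).PosSemidef := by
  rw [glsCovariance_eq_transpose_mul_mul hP, glsCovariance_eq_transpose_mul_mul hP,
    ← Matrix.sub_mul, ← Matrix.mul_sub]
  exact hCD.transpose_mul_mul_same _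

theorem glsCovariance_smul (c : ℝ) (C : Matrix m m ℝ) :
    glsCovariance X P (c • C) = c • glsCovariance X P C := by
  simp only [glsCovariance, Matrix.mul_smul, Matrix.smul_mul]

variable [DecidableEq m]

theorem glsCovariance_one :
    glsCovariance X P 1 = (Xᵀ * P * X)⁻¹ * (Xᵀ * P * P * X) * (Xᵀ * P * X)⁻¹ := by
  rw [glsCovariance, Matrix.mul_one]

theorem glsCovariance_one_sub_inv_posSemidef (hP : P.IsSymm) (hPX : IsUnit (Xᵀ * P * X).det)
    (hX : IsUnit (Xᵀ * X).det) : (glsCovariance X P 1 - (Xᵀ * X)⁻¹).PosSemidef := by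
  rw [glsCovariance_eq_transpose_mul_mul hP, Matrix.mul_one]
  refine posSemidef_transpose_mul_self_sub_inv ?_ hX
  rw [← Matrix.mul_assoc, ← Matrix.mul_assoc, mul_nonsing_inv _ hPX]

end Matrix

/-- For `X : n × p` of rank `p` and `P ≻ 0`, the matrix
`(XᵀPX)⁻¹XᵀP²X(XᵀPX)⁻¹ − (XᵀX)⁻¹` is psd; consequently for any `η² > 0` and any
Loewner-nondecreasing `Φ`, the maximum over `{C ⪰ 0 : C ⪯ η²·I}` of
`Φ((XᵀPX)⁻¹XᵀPCPX(XᵀPX)⁻¹)` equals `Φ(η²·(XᵀPX)⁻¹XᵀP²X(XᵀPX)⁻¹)`, which is at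
least `Φ(η²·(XᵀX)⁻¹)`, its value at `P = I`: OLS is minimax among GLS estimates. -/
theorem ols_minimax_correct_response (n p : ℕ)
    (X : Matrix (Fin n) (Fin p) ℝ) (hX : X.rank = p)
    (P : Matrix (Fin n) (Fin n) ℝ) (hP : P.PosDef) :
    ((Xᵀ * P * X)⁻¹ * (Xᵀ * P * P * X) * (Xᵀ * P * X)⁻¹ - (Xᵀ * X)⁻¹).PosSemidef ∧
    ∀ η2 : ℝ, 0 < η2 →
      ∀ Φ : Matrix (Fin p) (Fin p) ℝ → ℝ,
        (∀ A B : Matrix (Fin p) (Fin p) ℝ,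
          A.PosSemidef → B.PosSemidef → (B - A).PosSemidef → Φ A ≤ Φ B) →
        IsGreatest {r : ℝ | ∃ C : Matrix (Fin n) (Fin n) ℝ, C.PosSemidef ∧
            (η2 • (1 : Matrix (Fin n) (Fin n) ℝ) - C).PosSemidef ∧
            r = Φ ((Xᵀ * P * X)⁻¹ * (Xᵀ * P * C * P * X) * (Xᵀ * P * X)⁻¹)}
          (Φ (η2 • ((Xᵀ * P * X)⁻¹ * (Xᵀ * P * P * X) * (Xᵀ * P * X)⁻¹))) ∧
        Φ (η2 • (Xᵀ * X)⁻¹)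
          ≤ Φ (η2 • ((Xᵀ * P * X)⁻¹ * (Xᵀ * P * P * X) * (Xᵀ * P * X)⁻¹)) := by
  have hXinj := mulVec_injective_of_rank_eq_card (hX.trans (Fintype.card_fin p).symm)
  have hPX : (Xᵀ * P * X).PosDef := hP.transpose_mul_mul_same hXinj
  have hXX : (Xᵀ * X).PosDef := by simpa using PosDef.one.transpose_mul_mul_same hXinj
  have hPsymm : P.IsSymm := isHermitian_iff_isSymm.mp hP.isHermitian
  have hols := glsCovariance_one_sub_inv_posSemidef hPsymm
    ((isUnit_iff_isUnit_det _).mp hPX.isUnit) ((isUnit_iff_isUnit_det _).mp hXX.isUnit)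
  rw [← glsCovariance_one]
  refine ⟨hols, fun η2 hη2 Φ hΦ => ?_⟩
  have hη2one : (η2 • (1 : Matrix (Fin n) (Fin n) ℝ)).PosSemidef := PosSemidef.one.smul hη2.le
  have hmax := (glsCovariance_posSemidef (X := X) hPsymm PosSemidef.one).smul hη2.le
  refine ⟨⟨⟨η2 • 1, hη2one, by simpa using PosSemidef.zero,
    congrArg Φ (glsCovariance_smul η2 1).symm⟩, ?_⟩,
    hΦ _ _ (hXX.inv.posSemidef.smul hη2.le) hmax (by simpa only [smul_sub] using hols.smul hη2.le)⟩
  rintro _ ⟨C, hC, hCη2, rfl⟩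
  rw [← glsCovariance_smul]
  exact hΦ _ _ (glsCovariance_posSemidef hPsymm hC) (glsCovariance_posSemidef hPsymm hη2one)
    (glsCovariance_sub_posSemidef hPsymm hCη2)
end

section
/- Let Q be an n×p real matrix with orthonormal columns (QᵀQ = I_p) and let C be an n×n symmetric positive definite matrix. Then det(QᵀC⁻²Q) ≥ (det(QᵀC⁻¹Q))². Equivalently, the ratio r = det(QᵀC⁻²Q)/det(QᵀC⁻¹Q)² of the maximum loss of the generalized least squares estimate with precision matrix C⁻¹ to that of the ordinary least squares estimate, under determinant loss, is at least 1. -/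
/-!
Write `A = QᵀC⁻¹Q` and `N = QᵀC⁻²Q`. Since `1 - QQᵀ` is an orthogonal projection,
`N - A² = QᵀC⁻¹ (1 - QQᵀ) C⁻¹Q` is positive semidefinite, i.e. `A² ⪯ N` in the Loewner order.
The determinant is monotone for that order: conjugating by `N^{-1/2}` reduces `det A² ≤ det N`
to `det T ≤ 1` for `0 ⪯ T ⪯ 1`, where every eigenvalue of `T` lies in `[0, 1]`.
Finally `A` is positive definite, so `det A ^ 2 > 0` and the ratio is at least `1`.
-/

open Matrix
open scoped ComplexOrder

namespace Matrix

variable {m k : Type*} [Fintype m] [Fintype k] [DecidableEq m] [DecidableEq k]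

lemma PosSemidef.det_le_one {T : Matrix m m ℝ} (hT : T.PosSemidef) (h1T : (1 - T).PosSemidef) :
    T.det ≤ 1 := by
  open scoped MatrixOrder in
  have hspec : ∀ x ∈ spectrum ℝ T, x ≤ 1 :=
    (le_algebraMap_iff_spectrum_le hT.isHermitian.isSelfAdjoint).mp (by simpa [le_iff] using h1T)
  rw [hT.isHermitian.det_eq_prod_eigenvalues]
  simpa using Finset.prod_le_one (fun i _ ↦ hT.eigenvalues_nonneg i)
    fun i _ ↦ hspec _ (hT.isHermitian.eigenvalues_mem_spectrum_real i)

lemma PosSemidef.det_le_det {A B : Matrix m m ℝ} (hA : A.PosSemidef) (hB : B.PosDef)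
    (hAB : (B - A).PosSemidef) : A.det ≤ B.det := by
  open scoped MatrixOrder in
  obtain ⟨S, hS, hSS⟩ : ∃ S : Matrix m m ℝ, S.IsHermitian ∧ S * S = B :=
    ⟨CFC.sqrt B, (CFC.sqrt_nonneg B).posSemidef.isHermitian,
      CFC.sqrt_mul_sqrt_self B hB.posSemidef.nonneg⟩
  have hSdet : S.det ^ 2 = B.det := by rw [sq, ← det_mul, hSS]
  have hSunit : IsUnit S.det :=
    isUnit_iff_ne_zero.mpr fun h ↦ hB.det_pos.ne' (by simp [← hSdet, h])
  have hSinv : (S⁻¹)ᴴ = S⁻¹ := hS.inv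
  have hT := hA.conjTranspose_mul_mul_same S⁻¹
  have h1T := hAB.conjTranspose_mul_mul_same S⁻¹
  rw [hSinv] at hT h1T
  rw [Matrix.mul_sub, Matrix.sub_mul, ← hSS, ← Matrix.mul_assoc, nonsing_inv_mul _ hSunit,
    Matrix.one_mul, mul_nonsing_inv _ hSunit] at h1T
  have hdet : (S⁻¹ * A * S⁻¹).det = A.det / B.det := by
    rw [det_mul, det_mul, det_nonsing_inv, ← hSdet, Ring.inverse_eq_inv']
    ring
  rw [← div_le_one hB.det_pos, ← hdet]
  exact hT.det_le_one h1T

lemma PosDef.mul_self {𝕜 : Type*} [RCLike 𝕜] {A : Matrix m m 𝕜} (hA : A.PosDef) :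
    (A * A).PosDef := by
  simpa [hA.isHermitian.eq] using
    PosDef.conjTranspose_mul_self A (mulVec_injective_of_isUnit hA.isUnit)

variable {R : Type*} [CommRing R] [PartialOrder R] [StarRing R] [StarOrderedRing R]

lemma posSemidef_one_sub_mul_conjTranspose {Q : Matrix m k R} (hQ : Qᴴ * Q = 1) :
    (1 - Q * Qᴴ).PosSemidef := by
  have hP : (1 - Q * Qᴴ)ᴴ * (1 - Q * Qᴴ) = 1 - Q * Qᴴ := by
    have hidem : Q * Qᴴ * (Q * Qᴴ) = Q * Qᴴ := by
      rw [Matrix.mul_assoc, ← Matrix.mul_assoc Qᴴ, hQ, Matrix.one_mul]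
    simp only [conjTranspose_sub, conjTranspose_one, conjTranspose_mul, conjTranspose_conjTranspose,
      Matrix.sub_mul, Matrix.mul_sub, Matrix.one_mul, Matrix.mul_one, hidem]
    abel
  exact hP ▸ posSemidef_conjTranspose_mul_self (1 - Q * Qᴴ)

lemma posSemidef_compress_sq_sub_sq_compress {Q : Matrix m k R} (hQ : Qᴴ * Q = 1)
    {D : Matrix m m R} (hD : D.IsHermitian) :
    (Qᴴ * (D * D) * Q - (Qᴴ * D * Q) * (Qᴴ * D * Q)).PosSemidef := by
  have h := (posSemidef_one_sub_mul_conjTranspose hQ).conjTranspose_mul_mul_same (D * Q)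
  rw [conjTranspose_mul, hD.eq] at h
  convert h using 1
  simp only [Matrix.mul_sub, Matrix.sub_mul, Matrix.mul_one, Matrix.mul_assoc]

end Matrix

/-- For `Q : n × p` with orthonormal columns and `C ≻ 0`,
`det(QᵀC⁻²Q) ≥ (det(QᵀC⁻¹Q))²`; equivalently the ratio
`det(QᵀC⁻²Q)/det(QᵀC⁻¹Q)²` (GLS-to-OLS ratio of maximum determinant losses)
is at least 1. -/
theorem gls_ols_det_ratio_ge_one (n p : ℕ)
    (Q : Matrix (Fin n) (Fin p) ℝ) (hQ : Qᵀ * Q = 1)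
    (C : Matrix (Fin n) (Fin n) ℝ) (hC : C.PosDef) :
    (Qᵀ * C⁻¹ * Q).det ^ 2 ≤ (Qᵀ * (C⁻¹ * C⁻¹) * Q).det ∧
    1 ≤ (Qᵀ * (C⁻¹ * C⁻¹) * Q).det / (Qᵀ * C⁻¹ * Q).det ^ 2 := by
  rw [← conjTranspose_eq_transpose_of_trivial] at hQ ⊢
  have hQinj : Function.Injective Q.mulVec :=
    Function.LeftInverse.injective (g := Qᴴ.mulVec) fun x ↦ by rw [mulVec_mulVec, hQ, one_mulVec]
  have hA : (Qᴴ * C⁻¹ * Q).PosDef := hC.inv.conjTranspose_mul_mul_same hQinj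
  have hdiff := posSemidef_compress_sq_sub_sq_compress hQ hC.inv.isHermitian
  have hN : (Qᴴ * (C⁻¹ * C⁻¹) * Q).PosDef := by simpa using hA.mul_self.add_posSemidef hdiff
  have hdet : (Qᴴ * C⁻¹ * Q).det ^ 2 ≤ (Qᴴ * (C⁻¹ * C⁻¹) * Q).det := by
    rw [sq, ← det_mul]
    exact hA.mul_self.posSemidef.det_le_det hN hdiff
  exact ⟨hdet, (one_le_div (pow_pos hA.det_pos 2)).mpr hdet⟩
end

section
/- Let n ≥ 1, ρ ∈ (0,1), α = ρ/(1−ρ), β = α/(1+nα), and C₀ = (1−ρ)(I_n + α·1_n 1_nᵀ). Let Q be an n×p real matrix with orthonormal columns (QᵀQ = I_p) and set S = 1_nᵀ Q Qᵀ 1_n ∈ [0, n]. Then det(QᵀC₀⁻²Q)/det(QᵀC₀⁻¹Q)² = 1 + S·β²·(n − S)/(1 − Sβ)². -/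
/-!
`C₀` is a multiple of a rank-one perturbation `1 + α • v vᵀ` of the identity (`v` the all-ones
vector), so by Sherman–Morrison `C₀⁻¹ = (1 - ρ)⁻¹ (1 - β v vᵀ)` and
`C₀⁻² = (1 - ρ)⁻² (1 - (2β - nβ²) v vᵀ)`. Compressing by `Q` turns `v vᵀ` into `u uᵀ` with
`u = Qᵀ v` and `u ⬝ᵥ u = S`, so the matrix determinant lemma gives
`det (Qᵀ C₀⁻¹ Q) = (1 - ρ)⁻ᵖ (1 - βS)` and `det (Qᵀ C₀⁻² Q) = (1 - ρ)⁻²ᵖ (1 - (2β - nβ²)S)`;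
the ratio is then a rational identity. `S ≤ n` is Bessel's inequality, which also gives `βS < 1`.
-/

namespace Matrix

variable {ι κ R K : Type*} [Fintype ι]

theorem det_one_add_vecMulVec [Fintype κ] [CommRing R] [DecidableEq κ] (u v : κ → R) :
    det (1 + vecMulVec u v) = 1 + v ⬝ᵥ u := by
  rw [vecMulVec_eq Unit, det_one_add_replicateCol_mul_replicateRow]

theorem det_one_sub_smul_vecMulVec_self [Fintype κ] [CommRing R] [DecidableEq κ] (t : R)
    (u : κ → R) :
    det (1 - t • vecMulVec u u) = 1 - t * (u ⬝ᵥ u) := by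
  rw [sub_eq_add_neg, ← neg_smul, ← smul_vecMulVec, det_one_add_vecMulVec, dotProduct_smul,
    smul_eq_mul, neg_mul, ← sub_eq_add_neg]

theorem vecMulVec_self_mul_self [CommRing R] (v : ι → R) :
    vecMulVec v v * vecMulVec v v = (v ⬝ᵥ v) • vecMulVec v v := by
  rw [vecMulVec_mul_vecMulVec, vecMulVec_smul]

theorem one_sub_smul_vecMulVec_self_mul_self [CommRing R] [DecidableEq ι] (t : R) (v : ι → R) :
    (1 - t • vecMulVec v v) * (1 - t • vecMulVec v v)
      = 1 - (2 * t - (v ⬝ᵥ v) * t ^ 2) • vecMulVec v v := by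
  simp only [sub_mul, mul_sub, one_mul, mul_one, smul_mul_smul_comm, vecMulVec_self_mul_self,
    smul_smul]
  module

theorem one_add_smul_vecMulVec_self_mul_one_sub [Field K] [DecidableEq ι] (v : ι → K) {a : K}
    (ha : 1 + (v ⬝ᵥ v) * a ≠ 0) :
    (1 + a • vecMulVec v v) * (1 - (a / (1 + (v ⬝ᵥ v) * a)) • vecMulVec v v) = 1 := by
  set b := a / (1 + (v ⬝ᵥ v) * a)
  have hb : a - b - a * b * (v ⬝ᵥ v) = 0 := by
    rw [show a - b - a * b * (v ⬝ᵥ v) = a - b * (1 + (v ⬝ᵥ v) * a) by ring,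
      div_mul_cancel₀ a ha, sub_self]
  calc (1 + a • vecMulVec v v) * (1 - b • vecMulVec v v)
      = 1 + (a - b - a * b * (v ⬝ᵥ v)) • vecMulVec v v := by
        simp only [add_mul, mul_sub, one_mul, mul_one, smul_mul_smul_comm,
          vecMulVec_self_mul_self, smul_smul]
        module
    _ = 1 := by rw [hb, zero_smul, add_zero]

/-- Sherman–Morrison. -/
theorem inv_smul_one_add_smul_vecMulVec_self [Field K] [DecidableEq ι] (v : ι → K) {c a : K}
    (hc : c ≠ 0) (ha : 1 + (v ⬝ᵥ v) * a ≠ 0) :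
    (c • (1 + a • vecMulVec v v))⁻¹ = c⁻¹ • (1 - (a / (1 + (v ⬝ᵥ v) * a)) • vecMulVec v v) :=
  inv_eq_right_inv <| by
    rw [smul_mul_smul_comm, one_add_smul_vecMulVec_self_mul_one_sub v ha, mul_inv_cancel₀ hc,
      one_smul]

theorem transpose_mul_vecMulVec_self_mul [CommRing R] (Q : Matrix ι κ R) (v : ι → R) :
    Qᵀ * vecMulVec v v * Q = vecMulVec (Qᵀ *ᵥ v) (Qᵀ *ᵥ v) := by
  rw [mul_vecMulVec, vecMulVec_mul, mulVec_transpose]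

theorem dotProduct_mul_transpose_mulVec [Fintype κ] [CommRing R] (Q : Matrix ι κ R)
    (v w : ι → R) :
    v ⬝ᵥ (Q * Qᵀ) *ᵥ w = (Qᵀ *ᵥ v) ⬝ᵥ (Qᵀ *ᵥ w) := by
  rw [← mulVec_mulVec, dotProduct_mulVec, mulVec_transpose, mulVec_transpose]

theorem det_transpose_mul_smul_one_sub_smul_vecMulVec_mul [Fintype κ] [CommRing R]
    [DecidableEq ι] [DecidableEq κ] (Q : Matrix ι κ R) (hQ : Qᵀ * Q = 1) (c t : R) (v : ι → R) :
    det (Qᵀ * (c • (1 - t • vecMulVec v v)) * Q)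
      = c ^ Fintype.card κ * (1 - t * ((Qᵀ *ᵥ v) ⬝ᵥ (Qᵀ *ᵥ v))) := by
  rw [Matrix.mul_smul, Matrix.smul_mul, Matrix.mul_sub, Matrix.sub_mul, Matrix.mul_one, hQ,
    Matrix.mul_smul, Matrix.smul_mul, transpose_mul_vecMulVec_self_mul, det_smul,
    det_one_sub_smul_vecMulVec_self]

/-- Bessel's inequality for the orthonormal columns of `Q`. -/
theorem dotProduct_transpose_mulVec_self_le [Fintype κ] [DecidableEq κ] [CommRing R]
    [LinearOrder R] [IsStrictOrderedRing R]
    (Q : Matrix ι κ R) (hQ : Qᵀ * Q = 1) (v : ι → R) :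
    (Qᵀ *ᵥ v) ⬝ᵥ (Qᵀ *ᵥ v) ≤ v ⬝ᵥ v := by
  set u := Qᵀ *ᵥ v
  have hu : ∀ w, w ⬝ᵥ Q *ᵥ u = (Qᵀ *ᵥ w) ⬝ᵥ u := fun w => by
    rw [dotProduct_mulVec, mulVec_transpose]
  have hQu : Qᵀ *ᵥ (Q *ᵥ u) = u := by rw [mulVec_mulVec, hQ, one_mulVec]
  have h : v ⬝ᵥ v - u ⬝ᵥ u = (v - Q *ᵥ u) ⬝ᵥ (v - Q *ᵥ u) := by
    rw [dotProduct_sub, sub_dotProduct, sub_dotProduct, hu, hu, hQu, dotProduct_comm (Q *ᵥ u), hu]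
    ring
  have : 0 ≤ (v - Q *ᵥ u) ⬝ᵥ (v - Q *ᵥ u) := Finset.sum_nonneg fun i _ => mul_self_nonneg _
  linarith

end Matrix

open Matrix

theorem equicorrelation_det_ratio_general (n p : ℕ)
    (ρ : ℝ) (hρ : ρ ∈ Set.Ioo (0 : ℝ) 1)
    (α β : ℝ) (hα : α = ρ / (1 - ρ)) (hβ : β = α / (1 + (n : ℝ) * α))
    (E C₀ : Matrix (Fin n) (Fin n) ℝ)
    (hE : E = Matrix.of fun _ _ => (1 : ℝ))
    (hC₀ : C₀ = (1 - ρ) • ((1 : Matrix (Fin n) (Fin n) ℝ) + α • E))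
    (Q : Matrix (Fin n) (Fin p) ℝ) (hQ : Qᵀ * Q = 1)
    (S : ℝ) (hS : S = (fun _ => (1 : ℝ)) ⬝ᵥ (Q * Qᵀ).mulVec (fun _ => (1 : ℝ))) :
    S ∈ Set.Icc (0 : ℝ) (n : ℝ) ∧
    (Qᵀ * (C₀⁻¹ * C₀⁻¹) * Q).det / (Qᵀ * C₀⁻¹ * Q).det ^ 2
      = 1 + S * β ^ 2 * ((n : ℝ) - S) / (1 - S * β) ^ 2 := by
  obtain ⟨hρ0, hρ1⟩ := hρ
  set v : Fin n → ℝ := fun _ => 1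
  have hvv : v ⬝ᵥ v = n := by simp [v, dotProduct]
  have hEv : E = vecMulVec v v := by ext; simp [hE, v, vecMulVec_apply]
  have hSu : S = (Qᵀ *ᵥ v) ⬝ᵥ (Qᵀ *ᵥ v) := by rw [hS, dotProduct_mul_transpose_mulVec]
  have hS0 : 0 ≤ S := hSu ▸ Finset.sum_nonneg fun i _ => mul_self_nonneg _
  have hSn : S ≤ n := hSu ▸ hvv ▸ dotProduct_transpose_mulVec_self_le Q hQ v
  have hα0 : 0 < α := by rw [hα]; exact div_pos hρ0 (by linarith)
  have hβ0 : 0 < β := by rw [hβ]; positivity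
  have hnβ : n * β < 1 := by
    rw [hβ, mul_div_assoc', div_lt_one (by positivity)]
    linarith
  have hβS : 0 < 1 - β * S := by nlinarith
  have hCinv : C₀⁻¹ = (1 - ρ)⁻¹ • (1 - β • vecMulVec v v) := by
    rw [hC₀, hEv, hβ, ← hvv]
    exact inv_smul_one_add_smul_vecMulVec_self v (by linarith) (by rw [hvv]; positivity)
  refine ⟨⟨hS0, hSn⟩, ?_⟩
  rw [hCinv, smul_mul_smul_comm, one_sub_smul_vecMulVec_self_mul_self,
    det_transpose_mul_smul_one_sub_smul_vecMulVec_mul Q hQ,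
    det_transpose_mul_smul_one_sub_smul_vecMulVec_mul Q hQ, hvv, ← hSu]
  have hc : (1 - ρ)⁻¹ ^ Fintype.card (Fin p) ≠ 0 := pow_ne_zero _ (inv_ne_zero (by linarith))
  rw [mul_pow]
  generalize (1 - ρ)⁻¹ ^ Fintype.card (Fin p) = c at hc ⊢
  field_simp
  ring

/-- In the equicorrelation model, with `S = 1ᵀQQᵀ1 ∈ [0,n]`, the
GLS-to-OLS ratio of maximum determinant losses is
`det(QᵀC₀⁻²Q)/det(QᵀC₀⁻¹Q)² = 1 + S·β²·(n−S)/(1−Sβ)²`. -/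
theorem equicorrelation_det_ratio (n p : ℕ) (hn : 1 ≤ n)
    (ρ : ℝ) (hρ : ρ ∈ Set.Ioo (0 : ℝ) 1)
    (α β : ℝ) (hα : α = ρ / (1 - ρ)) (hβ : β = α / (1 + (n : ℝ) * α))
    (E C₀ : Matrix (Fin n) (Fin n) ℝ)
    (hE : E = Matrix.of fun _ _ => (1 : ℝ))
    (hC₀ : C₀ = (1 - ρ) • ((1 : Matrix (Fin n) (Fin n) ℝ) + α • E))
    (Q : Matrix (Fin n) (Fin p) ℝ) (hQ : Qᵀ * Q = 1)
    (S : ℝ) (hS : S = (fun _ => (1 : ℝ)) ⬝ᵥ (Q * Qᵀ).mulVec (fun _ => (1 : ℝ))) :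
    S ∈ Set.Icc (0 : ℝ) (n : ℝ) ∧
    (Qᵀ * (C₀⁻¹ * C₀⁻¹) * Q).det / (Qᵀ * C₀⁻¹ * Q).det ^ 2
      = 1 + S * β ^ 2 * ((n : ℝ) - S) / (1 - S * β) ^ 2 :=
  equicorrelation_det_ratio_general n p ρ hρ α β hα hβ E C₀ hE hC₀ Q hQ S hS
end

section
/- Let X be an n×p real matrix of rank p, θ ∈ ℝᵖ, and P an n×n symmetric positive definite matrix with P ≠ I_n and XᵀPX invertible. Let ε be a random vector in ℝⁿ with square-integrable components satisfying E[ε_i] = 0 and E[ε_i ε_j] = σ²·δ_{ij} for some σ² > 0, and let y = Xθ + ε. Let H be the orthogonal projection matrix onto the column space of the n×2p matrix [X PX], and suppose rank(H) < n. Then E[‖(I_n − H)y‖²] = σ²·(n − rank(H)); i.e., S² = ‖(I_n − H)y‖²/(n − rank(H)) is an unbiased estimate of σ². -/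
/-!
Since `H` is idempotent and its range contains the columns of `X`, it fixes `Xθ`, so
`(I - H) y = (I - H) ε`. As `M = I - H` is a symmetric idempotent, `‖M ε‖² = εᵀ M ε`,
whose expectation under the isotropic covariance `σ² I` is `σ² tr M`; and the trace of
an idempotent matrix is its rank, so `tr M = n - rank H`.
-/

open Matrix MeasureTheory

namespace Matrix

variable {ι R : Type*} [Fintype ι]

theorem isIdempotentElem_mulVecLin [CommSemiring R] {A : Matrix ι ι R}
    (hA : IsIdempotentElem A) : IsIdempotentElem A.mulVecLin := by
  rw [IsIdempotentElem, Module.End.mul_eq_comp, ← mulVecLin_mul, hA.eq]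

theorem mulVec_eq_self_of_mem_range [CommSemiring R] {A : Matrix ι ι R}
    (hA : IsIdempotentElem A) {x : ι → R} (hx : x ∈ LinearMap.range A.mulVecLin) :
    A *ᵥ x = x :=
  (LinearMap.IsIdempotentElem.mem_range_iff (isIdempotentElem_mulVecLin hA)).mp hx

theorem trace_eq_rank_of_isIdempotentElem [DecidableEq ι] [Field R] {A : Matrix ι ι R}
    (hA : IsIdempotentElem A) : A.trace = A.rank := by
  rw [rank, ← (LinearMap.IsIdempotentElem.isProj_range _ (isIdempotentElem_mulVecLin hA)).trace,
    ← toLin'_apply', trace_toLin'_eq]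

theorem mulVec_dotProduct_mulVec_self [CommSemiring R] {M : Matrix ι ι R}
    (hsymm : Mᵀ = M) (hidem : IsIdempotentElem M) (v : ι → R) :
    (M *ᵥ v) ⬝ᵥ (M *ᵥ v) = v ⬝ᵥ (M *ᵥ v) := by
  rw [dotProduct_mulVec, ← hsymm, vecMul_transpose, dotProduct_comm, mulVec_mulVec, hsymm,
    hidem.eq]

end Matrix

theorem integral_dotProduct_mulVec_of_isotropic {ι Ω : Type*} [Fintype ι] [DecidableEq ι]
    [MeasurableSpace Ω] {μ : Measure Ω} {ε : Ω → ι → ℝ} {σ2 : ℝ}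
    (hmem : ∀ i, MemLp (fun ω => ε ω i) 2 μ)
    (hcov : ∀ i j, ∫ ω, ε ω i * ε ω j ∂μ = if i = j then σ2 else 0) (A : Matrix ι ι ℝ) :
    ∫ ω, ε ω ⬝ᵥ (A *ᵥ ε ω) ∂μ = σ2 * A.trace := by
  have hint : ∀ i j, Integrable (fun ω => ε ω i * (A i j * ε ω j)) μ := fun i j =>
    (hmem i).integrable_mul ((hmem j).const_mul (A i j))
  calc ∫ ω, ε ω ⬝ᵥ (A *ᵥ ε ω) ∂μ
      = ∑ i, ∑ j, A i j * ∫ ω, ε ω i * ε ω j ∂μ := by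
        simp only [dotProduct, mulVec, Finset.mul_sum]
        rw [integral_finsetSum _ fun i _ => integrable_finsetSum _ fun j _ => hint i j]
        refine Finset.sum_congr rfl fun i _ => ?_
        rw [integral_finsetSum _ fun j _ => hint i j]
        refine Finset.sum_congr rfl fun j _ => ?_
        rw [← integral_const_mul]
        congr 1 with ω
        ring
    _ = σ2 * A.trace := by
        simp [hcov, trace, Finset.mul_sum, mul_comm]

theorem unbiased_variance_estimate_general (n p : ℕ)
    (X : Matrix (Fin n) (Fin p) ℝ) (θ : Fin p → ℝ)
    (P : Matrix (Fin n) (Fin n) ℝ)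
    (H : Matrix (Fin n) (Fin n) ℝ) (hHsymm : Hᵀ = H) (hHidem : H * H = H)
    (hHrange : LinearMap.range H.mulVecLin
      = LinearMap.range (Matrix.fromCols X (P * X)).mulVecLin)
    (Ω : Type*) [MeasurableSpace Ω] (μ : Measure Ω)
    (ε : Ω → Fin n → ℝ) (σ2 : ℝ)
    (hmem : ∀ i, MemLp (fun ω => ε ω i) 2 μ)
    (hcov : ∀ i j, ∫ ω, ε ω i * ε ω j ∂μ = if i = j then σ2 else 0)
    (y : Ω → Fin n → ℝ) (hy : ∀ ω, y ω = X.mulVec θ + ε ω) :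
    ∫ ω, ∑ i, (((1 : Matrix (Fin n) (Fin n) ℝ) - H).mulVec (y ω) i) ^ 2 ∂μ
      = σ2 * ((n : ℝ) - (H.rank : ℝ)) := by
  set M : Matrix (Fin n) (Fin n) ℝ := 1 - H
  have hMidem : IsIdempotentElem M := IsIdempotentElem.one_sub hHidem
  have hMsymm : Mᵀ = M := by simp [M, hHsymm]
  have hXθ : H *ᵥ (X *ᵥ θ) = X *ᵥ θ := by
    refine mulVec_eq_self_of_mem_range hHidem ?_
    rw [hHrange]
    exact ⟨Sum.elim θ 0, by simp⟩
  have hMy : ∀ ω, M *ᵥ y ω = M *ᵥ ε ω := fun ω => by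
    rw [hy, mulVec_add, sub_mulVec, one_mulVec, hXθ, sub_self, zero_add]
  calc ∫ ω, ∑ i, (M *ᵥ y ω) i ^ 2 ∂μ = ∫ ω, ε ω ⬝ᵥ (M *ᵥ ε ω) ∂μ := by
        congr 1 with ω
        rw [hMy, ← mulVec_dotProduct_mulVec_self hMsymm hMidem]
        simp only [dotProduct, sq]
    _ = σ2 * M.trace := integral_dotProduct_mulVec_of_isotropic hmem hcov M
    _ = σ2 * (n - H.rank) := by
        rw [trace_sub, trace_one, trace_eq_rank_of_isIdempotentElem hHidem, Fintype.card_fin]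

/-- In the linear model `y = Xθ + ε` with uncorrelated
homoscedastic errors (`E[εᵢ]=0`, `E[εᵢεⱼ]=σ²δᵢⱼ`), if `H` is the orthogonal
projection onto the column space of `[X PX]` with `rank H < n`, then
`E[‖(I−H)y‖²] = σ²(n − rank H)`; i.e. `S² = ‖(I−H)y‖²/(n − rank H)` is an
unbiased estimate of `σ²`. -/
theorem unbiased_variance_estimate (n p : ℕ)
    (X : Matrix (Fin n) (Fin p) ℝ) (hX : X.rank = p) (θ : Fin p → ℝ)
    (P : Matrix (Fin n) (Fin n) ℝ) (hP : P.PosDef) (hPne : P ≠ 1)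
    (H : Matrix (Fin n) (Fin n) ℝ) (hHsymm : Hᵀ = H) (hHidem : H * H = H)
    (hHrange : LinearMap.range H.mulVecLin
      = LinearMap.range (Matrix.fromCols X (P * X)).mulVecLin)
    (hrk : H.rank < n)
    (Ω : Type*) [MeasurableSpace Ω] (μ : Measure Ω) [IsProbabilityMeasure μ]
    (ε : Ω → Fin n → ℝ) (σ2 : ℝ) (hσ : 0 < σ2)
    (hmem : ∀ i, MemLp (fun ω => ε ω i) 2 μ)
    (hmean : ∀ i, ∫ ω, ε ω i ∂μ = 0)
    (hcov : ∀ i j, ∫ ω, ε ω i * ε ω j ∂μ = if i = j then σ2 else 0)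
    (y : Ω → Fin n → ℝ) (hy : ∀ ω, y ω = X.mulVec θ + ε ω) :
    ∫ ω, ∑ i, (((1 : Matrix (Fin n) (Fin n) ℝ) - H).mulVec (y ω) i) ^ 2 ∂μ
      = σ2 * ((n : ℝ) - (H.rank : ℝ)) :=
  unbiased_variance_estimate_general n p X θ P H hHsymm hHidem hHrange Ω μ ε σ2 hmem hcov y hy
end

section
/- Let X be an n×p real matrix of rank p, θ ∈ ℝᵖ, and P an n×n symmetric positive definite matrix with XᵀPX invertible. Let ε be a random vector in ℝⁿ with square-integrable components satisfying E[ε_i] = 0 and E[ε_i ε_j] = σ²·δ_{ij}, let y = Xθ + ε, and let θ̂ = (XᵀPX)⁻¹XᵀPy. Let H be the orthogonal projection matrix onto the column space of [X PX]. Then (I_n − H)y and θ̂ are uncorrelated: for all indices i, j, E[((I_n − H)y)_i · (θ̂ − θ)_j] = 0. -/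
open Matrix MeasureTheory

/-!
Write `B = (XᵀPX)⁻¹XᵀP`. The idempotent `H` fixes its range, hence `HX = X` and `HPX = PX`.
So the residual is `(I - H)ε`, and since `BX = I` the estimation error is `Bε`. For errors
with second moments `σ² I`, the cross moments of `Aε` and `Bε` form the matrix `σ² ABᵀ`.
Finally `Bᵀ = PX(XᵀPX)⁻ᵀ` by symmetry of `P`, so `(I - H)Bᵀ = 0`.
-/

theorem Matrix.mul_eq_self_of_range_le_range {R n m : Type*} [CommSemiring R] [Fintype n]
    [Fintype m] {H : Matrix n n R} {M : Matrix n m R} (hH : H * H = H)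
    (hM : LinearMap.range M.mulVecLin ≤ LinearMap.range H.mulVecLin) : H * M = M := by
  classical
  refine ext_of_mulVec_single fun b => ?_
  obtain ⟨w, hw⟩ := hM ⟨Pi.single b 1, rfl⟩
  simp only [mulVecLin_apply] at hw
  rw [← mulVec_mulVec, ← hw, mulVec_mulVec, hH]

theorem Matrix.mul_fromCols_eq_self_of_range_eq {R n m₁ m₂ : Type*} [CommSemiring R] [Fintype n]
    [Fintype m₁] [Fintype m₂] {H : Matrix n n R} {M₁ : Matrix n m₁ R} {M₂ : Matrix n m₂ R}
    (hH : H * H = H)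
    (hrange : LinearMap.range H.mulVecLin = LinearMap.range (fromCols M₁ M₂).mulVecLin) :
    H * M₁ = M₁ ∧ H * M₂ = M₂ := by
  have hfix := mul_eq_self_of_range_le_range hH hrange.ge
  rw [mul_fromCols] at hfix
  exact fromCols_inj hfix

section GLS

variable {R n p : Type*} [CommRing R] [Fintype n] [Fintype p] [DecidableEq p]
  {X : Matrix n p R} {P : Matrix n n R}

theorem gls_mul_self (hXPX : IsUnit (Xᵀ * P * X).det) : (Xᵀ * P * X)⁻¹ * Xᵀ * P * X = 1 := by
  simpa only [Matrix.mul_assoc] using nonsing_inv_mul _ hXPX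

theorem mul_transpose_gls_eq_zero {m : Type*} {A : Matrix m n R} (hP : Pᵀ = P)
    (hA : A * (P * X) = 0) : A * ((Xᵀ * P * X)⁻¹ * Xᵀ * P)ᵀ = 0 := by
  rw [transpose_mul, transpose_mul, hP, transpose_transpose, ← Matrix.mul_assoc P,
    ← Matrix.mul_assoc, hA, Matrix.zero_mul]

end GLS

section SecondMoments

variable {Ω ι : Type*} [MeasurableSpace Ω] {μ : Measure Ω} [Fintype ι]

theorem integral_mulVec_mul_mulVec {κ κ' : Type*} (A : Matrix κ ι ℝ) (B : Matrix κ' ι ℝ)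
    {ε : Ω → ι → ℝ} (hε : ∀ k l, Integrable (fun ω => ε ω k * ε ω l) μ) (i : κ) (j : κ') :
    ∫ ω, (A *ᵥ ε ω) i * (B *ᵥ ε ω) j ∂μ
      = (A * Matrix.of (fun k l => ∫ ω, ε ω k * ε ω l ∂μ) * Bᵀ) i j := by
  have hexpand : ∀ ω, (A *ᵥ ε ω) i * (B *ᵥ ε ω) j
      = ∑ k, ∑ l, A i k * B j l * (ε ω k * ε ω l) := fun ω => by
    simp only [mulVec, dotProduct, Finset.sum_mul_sum]
    exact Finset.sum_congr rfl fun k _ => Finset.sum_congr rfl fun l _ => by ring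
  simp_rw [hexpand]
  rw [integral_finsetSum _ fun k _ => integrable_finsetSum _ fun l _ => (hε k l).const_mul _]
  simp_rw [integral_finsetSum _ fun l _ => (hε _ l).const_mul _, integral_const_mul]
  simp only [mul_apply, transpose_apply, of_apply, Finset.sum_mul]
  rw [Finset.sum_comm]
  exact Finset.sum_congr rfl fun k _ => Finset.sum_congr rfl fun l _ => by ring

theorem integral_mulVec_mul_mulVec_of_uncorrelated [DecidableEq ι] {κ κ' : Type*}
    (A : Matrix κ ι ℝ) (B : Matrix κ' ι ℝ) {ε : Ω → ι → ℝ} {σ2 : ℝ}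
    (hε : ∀ k, MemLp (fun ω => ε ω k) 2 μ)
    (hcov : ∀ k l, ∫ ω, ε ω k * ε ω l ∂μ = if k = l then σ2 else 0) (i : κ) (j : κ') :
    ∫ ω, (A *ᵥ ε ω) i * (B *ᵥ ε ω) j ∂μ = σ2 * (A * Bᵀ) i j := by
  have hmoment : Matrix.of (fun k l => ∫ ω, ε ω k * ε ω l ∂μ) = σ2 • (1 : Matrix ι ι ℝ) := by
    ext k l
    simp [hcov, one_apply]
  rw [integral_mulVec_mul_mulVec A B (fun k l => (hε k).integrable_mul (hε l)), hmoment]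
  simp

end SecondMoments

theorem residuals_uncorrelated_with_gls_general (n p : ℕ)
    (X : Matrix (Fin n) (Fin p) ℝ) (θ : Fin p → ℝ)
    (P : Matrix (Fin n) (Fin n) ℝ) (hP : P.PosDef)
    (hXPX : IsUnit (Xᵀ * P * X).det)
    (H : Matrix (Fin n) (Fin n) ℝ) (hHidem : H * H = H)
    (hHrange : LinearMap.range H.mulVecLin
      = LinearMap.range (Matrix.fromCols X (P * X)).mulVecLin)
    (Ω : Type*) [MeasurableSpace Ω] (μ : Measure Ω)
    (ε : Ω → Fin n → ℝ) (σ2 : ℝ)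
    (hmem : ∀ i, MemLp (fun ω => ε ω i) 2 μ)
    (hcov : ∀ i j, ∫ ω, ε ω i * ε ω j ∂μ = if i = j then σ2 else 0)
    (y : Ω → Fin n → ℝ) (hy : ∀ ω, y ω = X.mulVec θ + ε ω)
    (θhat : Ω → Fin p → ℝ)
    (hθhat : ∀ ω, θhat ω = ((Xᵀ * P * X)⁻¹ * Xᵀ * P).mulVec (y ω)) :
    ∀ (i : Fin n) (j : Fin p),
      ∫ ω, (((1 : Matrix (Fin n) (Fin n) ℝ) - H).mulVec (y ω) i) * (θhat ω j - θ j) ∂μ = 0 := by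
  intro i j
  obtain ⟨hHX, hHPX⟩ := mul_fromCols_eq_self_of_range_eq hHidem hHrange
  set B := (Xᵀ * P * X)⁻¹ * Xᵀ * P
  have hres : ∀ ω, (1 - H) *ᵥ y ω = (1 - H) *ᵥ ε ω := fun ω => by
    rw [hy, mulVec_add, mulVec_mulVec, Matrix.sub_mul, Matrix.one_mul, hHX, sub_self,
      zero_mulVec, zero_add]
  have herr : ∀ ω, θhat ω - θ = B *ᵥ ε ω := fun ω => by
    rw [hθhat, hy, mulVec_add, mulVec_mulVec, gls_mul_self hXPX, one_mulVec, add_sub_cancel_left]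
  have horth : (1 - H) * Bᵀ = 0 :=
    mul_transpose_gls_eq_zero ((conjTranspose_eq_transpose_of_trivial P).symm.trans hP.isHermitian)
      (by rw [Matrix.sub_mul, Matrix.one_mul, hHPX, sub_self])
  calc ∫ ω, ((1 - H) *ᵥ y ω) i * (θhat ω j - θ j) ∂μ
      = ∫ ω, ((1 - H) *ᵥ ε ω) i * (B *ᵥ ε ω) j ∂μ := by
        simp_rw [hres, ← herr, Pi.sub_apply]
    _ = σ2 * ((1 - H : Matrix (Fin n) (Fin n) ℝ) * Bᵀ) i j := integral_mulVec_mul_mulVec_of_uncorrelated _ _ hmem hcov i j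
    _ = 0 := by rw [horth, Matrix.zero_apply, mul_zero]

/-- In the linear model `y = Xθ + ε` with uncorrelated
homoscedastic errors, the residual vector `(I−H)y` (with `H` the orthogonal
projection onto the column space of `[X PX]`) is uncorrelated with the GLS
estimate `θ̂ = (XᵀPX)⁻¹XᵀPy`: every cross-covariance
`E[((I−H)y)ᵢ·(θ̂−θ)ⱼ]` vanishes. -/
theorem residuals_uncorrelated_with_gls (n p : ℕ)
    (X : Matrix (Fin n) (Fin p) ℝ) (hX : X.rank = p) (θ : Fin p → ℝ)
    (P : Matrix (Fin n) (Fin n) ℝ) (hP : P.PosDef)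
    (hXPX : IsUnit (Xᵀ * P * X).det)
    (H : Matrix (Fin n) (Fin n) ℝ) (hHsymm : Hᵀ = H) (hHidem : H * H = H)
    (hHrange : LinearMap.range H.mulVecLin
      = LinearMap.range (Matrix.fromCols X (P * X)).mulVecLin)
    (Ω : Type*) [MeasurableSpace Ω] (μ : Measure Ω) [IsProbabilityMeasure μ]
    (ε : Ω → Fin n → ℝ) (σ2 : ℝ) (hσ : 0 < σ2)
    (hmem : ∀ i, MemLp (fun ω => ε ω i) 2 μ)
    (hmean : ∀ i, ∫ ω, ε ω i ∂μ = 0)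
    (hcov : ∀ i j, ∫ ω, ε ω i * ε ω j ∂μ = if i = j then σ2 else 0)
    (y : Ω → Fin n → ℝ) (hy : ∀ ω, y ω = X.mulVec θ + ε ω)
    (θhat : Ω → Fin p → ℝ)
    (hθhat : ∀ ω, θhat ω = ((Xᵀ * P * X)⁻¹ * Xᵀ * P).mulVec (y ω)) :
    ∀ (i : Fin n) (j : Fin p),
      ∫ ω, (((1 : Matrix (Fin n) (Fin n) ℝ) - H).mulVec (y ω) i) * (θhat ω j - θ j) ∂μ = 0 :=
  residuals_uncorrelated_with_gls_general n p X θ P hP hXPX H hHidem hHrange Ω μ ε σ2 hmem hcov y hy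
    θhat hθhat
end

section
/- In the design setup, for every n×n symmetric positive definite matrix P (with QᵀUQ invertible, where U = JᵀPJ): (i) I₀(ξ,P) ≥ I₀(ξ,I_n), and (ii) I₁(ξ,P) ≥ λmax[(Q₊ᵀQ₊)⁻¹], provided Q₊ᵀQ₊ is invertible. -/
open Matrix

/-- The largest eigenvalue of a real square matrix (for the symmetric matrices
considered here the set of eigenvalues is finite and nonempty, and `sSup`
yields its maximum). -/
noncomputable def lmax {m : ℕ} (A : Matrix (Fin m) (Fin m) ℝ) : ℝ :=
  sSup {r : ℝ | ∃ v : Fin m → ℝ, v ≠ 0 ∧ A.mulVec v = r • v}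

/-!
Both bounds are instances of a matrix Cauchy–Schwarz inequality: if `Fᴴ G` is invertible then
`(Fᴴ F)⁻¹ ≤ (Gᴴ F)⁻¹ (Gᴴ G) (Fᴴ G)⁻¹` in the Loewner order, because the difference is `Hᴴ H` for
`H = G (Fᴴ G)⁻¹ - F (Fᴴ F)⁻¹`. With `K = J Q = J₊ Q₊` and `M = Kᵀ P K = Qᵀ U Q`, bound (i) takes
`F = K`, `G = P K`, and bound (ii) takes `F = Q₊`, `G = J₊ᵀ P K`; the latter uses `J Jᵀ = J₊ J₊ᵀ`.
Taking traces gives (i), and `λmax` is monotone in the Loewner order, which gives (ii).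
-/

open scoped MatrixOrder ComplexOrder

namespace Matrix

variable {𝕜 ι κ : Type*} [RCLike 𝕜] [Fintype ι] [Fintype κ] [DecidableEq κ]

theorem isUnit_conjTranspose_mul_self_of_isUnit {F G : Matrix ι κ 𝕜} (h : IsUnit (Fᴴ * G)) :
    IsUnit (Fᴴ * F) := by
  have hGF : Function.Injective (Gᴴ * F).mulVec := by
    rw [mulVec_injective_iff_isUnit]
    simpa [star_eq_conjTranspose] using h.star
  rw [← mulVec_injective_iff_isUnit]
  intro v w hvw
  refine hGF ?_
  have hF : F *ᵥ (v - w) = 0 := by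
    rw [← conjTranspose_mul_self_mulVec_eq_zero, mulVec_sub, hvw, sub_self]
  rw [← mulVec_mulVec, ← mulVec_mulVec, ← sub_eq_zero, ← mulVec_sub, ← mulVec_sub, hF,
    mulVec_zero]

theorem inv_conjTranspose_mul_self_le {F G : Matrix ι κ 𝕜} (h : IsUnit (Fᴴ * G).det) :
    (Fᴴ * F)⁻¹ ≤ (Gᴴ * F)⁻¹ * (Gᴴ * G) * (Fᴴ * G)⁻¹ := by
  set S := Fᴴ * F
  set X := (Fᴴ * G)⁻¹
  have hS : IsUnit S.det :=
    (isUnit_iff_isUnit_det _).1 (isUnit_conjTranspose_mul_self_of_isUnit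
      ((isUnit_iff_isUnit_det _).2 h))
  have hXH : Xᴴ = (Gᴴ * F)⁻¹ := by
    rw [conjTranspose_nonsing_inv, conjTranspose_mul, conjTranspose_conjTranspose]
  have hSH : S⁻¹ᴴ = S⁻¹ := by
    rw [conjTranspose_nonsing_inv, (isHermitian_conjTranspose_mul_self F).eq]
  have hXGF : Xᴴ * (Gᴴ * F) = 1 := by
    rw [hXH, nonsing_inv_mul]
    rw [← conjTranspose_conjTranspose F, ← conjTranspose_mul, det_conjTranspose]
    exact h.star
  have hFGX : Fᴴ * G * X = 1 := mul_nonsing_inv _ h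
  have hSS : S * S⁻¹ = 1 := mul_nonsing_inv _ hS
  have key : (G * X - F * S⁻¹)ᴴ * (G * X - F * S⁻¹) = Xᴴ * (Gᴴ * G) * X - S⁻¹ :=
    calc (G * X - F * S⁻¹)ᴴ * (G * X - F * S⁻¹)
        = Xᴴ * (Gᴴ * G) * X - Xᴴ * (Gᴴ * F) * S⁻¹ - S⁻¹ᴴ * (Fᴴ * G * X)
          + S⁻¹ᴴ * (S * S⁻¹) := by
          simp only [S, conjTranspose_sub, conjTranspose_mul, Matrix.sub_mul, Matrix.mul_sub,
            Matrix.mul_assoc]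
          abel
      _ = Xᴴ * (Gᴴ * G) * X - S⁻¹ := by
          rw [hXGF, hFGX, hSS, hSH]
          simp
  rw [le_iff, ← hXH, ← key]
  exact posSemidef_conjTranspose_mul_self _

theorem inv_transpose_mul_self_le {F G : Matrix ι κ ℝ} {M : Matrix κ κ ℝ}
    (hFG : Fᵀ * G = M) (hGF : Gᵀ * F = M) (hM : IsUnit M.det) :
    (Fᵀ * F)⁻¹ ≤ M⁻¹ * (Gᵀ * G) * M⁻¹ := by
  have h := inv_conjTranspose_mul_self_le (F := F) (G := G)
    (by rwa [conjTranspose_eq_transpose_of_trivial, hFG])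
  simpa only [conjTranspose_eq_transpose_of_trivial, hFG, hGF] using h

theorem IsSymm.inv_transpose_mul_self_le {P : Matrix ι ι ℝ} (hP : P.IsSymm) {K : Matrix ι κ ℝ}
    (h : IsUnit (Kᵀ * P * K).det) :
    (Kᵀ * K)⁻¹ ≤ (Kᵀ * P * K)⁻¹ * (Kᵀ * P * P * K) * (Kᵀ * P * K)⁻¹ := by
  have hGG : (P * K)ᵀ * (P * K) = Kᵀ * P * P * K := by
    simp only [transpose_mul, hP.eq, Matrix.mul_assoc]
  rw [← hGG]
  exact Matrix.inv_transpose_mul_self_le (Matrix.mul_assoc _ _ _).symm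
    (by rw [transpose_mul, hP.eq]) h

theorem IsSymm.inv_transpose_mul_self_le_of_mul {ι' : Type*} [Fintype ι'] {P : Matrix ι ι ℝ}
    (hP : P.IsSymm) (L : Matrix ι ι' ℝ) {F : Matrix ι' κ ℝ}
    (h : IsUnit ((L * F)ᵀ * P * (L * F)).det) :
    (Fᵀ * F)⁻¹ ≤ ((L * F)ᵀ * P * (L * F))⁻¹ * ((L * F)ᵀ * P * (L * Lᵀ) * P * (L * F))
      * ((L * F)ᵀ * P * (L * F))⁻¹ := by
  have hGG : (Lᵀ * P * (L * F))ᵀ * (Lᵀ * P * (L * F))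
      = (L * F)ᵀ * P * (L * Lᵀ) * P * (L * F) := by
    simp only [transpose_mul, transpose_transpose, hP.eq, Matrix.mul_assoc]
  rw [← hGG]
  refine Matrix.inv_transpose_mul_self_le ?_ ?_ h
  · simp only [transpose_mul, Matrix.mul_assoc]
  · simp only [transpose_mul, transpose_transpose, hP.eq, Matrix.mul_assoc]

theorem mul_eq_submatrix_mul_submatrix {α l m m' o : Type*} [NonUnitalNonAssocSemiring α]
    [Fintype m] [Fintype m'] (A : Matrix l m α) (B : Matrix m o α) (e : m' ↪ m)
    (h : ∀ j ∉ Set.range e, ∀ i, A i j = 0) :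
    A * B = A.submatrix id e * B.submatrix e id := by
  ext i k
  simp only [mul_apply, submatrix_apply, id_eq]
  rw [← Finset.sum_map _ e (fun j => A i j * B j k)]
  refine (Finset.sum_subset (Finset.subset_univ _) fun j _ hj => ?_).symm
  rw [h j (by simpa using hj) i, zero_mul]

end Matrix

section lmax

variable {m : ℕ}

theorem lmax_eq_sSup_spectrum (A : Matrix (Fin m) (Fin m) ℝ) :
    lmax A = sSup (spectrum ℝ A) := by
  rw [lmax, ← spectrum_toLin']
  congr 1
  ext r
  rw [← Module.End.hasEigenvalue_iff_mem_spectrum, Module.End.hasEigenvalue_iff,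
    Submodule.ne_bot_iff]
  simp only [Module.End.mem_eigenspace_iff, toLin'_apply]
  exact ⟨fun ⟨v, hv, hAv⟩ => ⟨v, hAv, hv⟩, fun ⟨v, hAv, hv⟩ => ⟨v, hv, hAv⟩⟩

theorem lmax_le_iff [NeZero m] {A : Matrix (Fin m) (Fin m) ℝ} (hA : A.IsHermitian) {r : ℝ} :
    lmax A ≤ r ↔ A ≤ algebraMap ℝ _ r := by
  rw [lmax_eq_sSup_spectrum, csSup_le_iff finite_real_spectrum.bddAbove
    (ContinuousFunctionalCalculus.spectrum_nonempty A hA.isSelfAdjoint),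
    le_algebraMap_iff_spectrum_le hA.isSelfAdjoint]

theorem lmax_mono {A C : Matrix (Fin m) (Fin m) ℝ} (hA : A.IsHermitian) (h : A ≤ C) :
    lmax A ≤ lmax C := by
  cases m with
  | zero => rw [Subsingleton.elim A C]
  | succ m =>
    have hC : C.IsHermitian := by simpa using hA.add (le_iff.1 h).isHermitian
    exact (lmax_le_iff hA).2 (h.trans ((lmax_le_iff hC).1 le_rfl))

end lmax

theorem loss_lower_bounds_general (N n p q : ℕ)
    (Q : Matrix (Fin N) (Fin p) ℝ)
    (J : Matrix (Fin n) (Fin N) ℝ)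
    (e : Fin q ↪ Fin N)
    (hsupp : ∀ j, j ∉ Set.range ⇑e → ∀ i, J i j = 0)
    (Jp : Matrix (Fin n) (Fin q) ℝ) (hJp : ∀ i k, Jp i k = J i (e k))
    (Qp : Matrix (Fin q) (Fin p) ℝ) (hQp : ∀ k j, Qp k j = Q (e k) j)
    (Dp : Matrix (Fin q) (Fin q) ℝ) (hDp : Dp = Jpᵀ * Jp)
    (P : Matrix (Fin n) (Fin n) ℝ) (hP : P.PosDef)
    (hQUQ : IsUnit (Qᵀ * (Jᵀ * P * J) * Q).det) :
    Matrix.trace ((Qpᵀ * Dp * Qp)⁻¹)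
      ≤ Matrix.trace ((Qᵀ * (Jᵀ * P * J) * Q)⁻¹ * (Qᵀ * (Jᵀ * P * P * J) * Q)
          * (Qᵀ * (Jᵀ * P * J) * Q)⁻¹) ∧
    lmax ((Qpᵀ * Qp)⁻¹)
      ≤ lmax ((Qᵀ * (Jᵀ * P * J) * Q)⁻¹ * (Qᵀ * ((Jᵀ * P * J) * (Jᵀ * P * J)) * Q)
          * (Qᵀ * (Jᵀ * P * J) * Q)⁻¹) := by
  have hPs : P.IsSymm := isHermitian_iff_isSymm.1 hP.isHermitian
  have hJp' : Jp = J.submatrix id e := Matrix.ext hJp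
  have hK : J * Q = Jp * Qp := by
    rw [hJp', show Qp = Q.submatrix e id from Matrix.ext hQp]
    exact mul_eq_submatrix_mul_submatrix J Q e hsupp
  have hJJ : J * Jᵀ = Jp * Jpᵀ := by
    rw [hJp']
    exact mul_eq_submatrix_mul_submatrix J Jᵀ e hsupp
  have hU : Qᵀ * (Jᵀ * P * J) * Q = (Jp * Qp)ᵀ * P * (Jp * Qp) := by
    simp only [← hK, transpose_mul, Matrix.mul_assoc]
  have hV : Qᵀ * (Jᵀ * P * P * J) * Q = (Jp * Qp)ᵀ * P * P * (Jp * Qp) := by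
    simp only [← hK, transpose_mul, Matrix.mul_assoc]
  have hW : Qᵀ * (Jᵀ * P * J * (Jᵀ * P * J)) * Q
      = (Jp * Qp)ᵀ * P * (Jp * Jpᵀ) * P * (Jp * Qp) := by
    simp only [← hK, ← hJJ, transpose_mul, Matrix.mul_assoc]
  have hD : Qpᵀ * Dp * Qp = (Jp * Qp)ᵀ * (Jp * Qp) := by
    simp only [hDp, transpose_mul, Matrix.mul_assoc]
  rw [hU] at hQUQ
  rw [hU, hV, hW, hD]
  exact ⟨OrderHomClass.mono (tracePositiveLinearMap (Fin p) ℝ ℝ)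
      (hPs.inv_transpose_mul_self_le hQUQ),
    lmax_mono (isHermitian_conjTranspose_mul_self Qp).inv
      (hPs.inv_transpose_mul_self_le_of_mul Jp hQUQ)⟩

/-- In the design setup, for every symmetric positive definite
precision matrix `P`: (i) `I₀(ξ,P) ≥ I₀(ξ,Iₙ) = tr[(Q₊ᵀD₊Q₊)⁻¹]`, and
(ii) `I₁(ξ,P) ≥ λmax[(Q₊ᵀQ₊)⁻¹]`. -/
theorem loss_lower_bounds (N n p q : ℕ) (hp : 0 < p) (hpq : p ≤ q)
    (hqn : q ≤ n) (hqN : q ≤ N)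
    (Q : Matrix (Fin N) (Fin p) ℝ) (hQ : Qᵀ * Q = 1)
    (J : Matrix (Fin n) (Fin N) ℝ)
    (hJ : ∀ i, ∃ j₀, ∀ j, J i j = if j = j₀ then (1 : ℝ) else 0)
    (e : Fin q ↪ Fin N)
    (hsupp : ∀ j, j ∉ Set.range ⇑e → ∀ i, J i j = 0)
    (hpos : ∀ k, ∃ i, J i (e k) = 1)
    (Jp : Matrix (Fin n) (Fin q) ℝ) (hJp : ∀ i k, Jp i k = J i (e k))
    (Qp : Matrix (Fin q) (Fin p) ℝ) (hQp : ∀ k j, Qp k j = Q (e k) j)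
    (Dp : Matrix (Fin q) (Fin q) ℝ) (hDp : Dp = Jpᵀ * Jp)
    (P : Matrix (Fin n) (Fin n) ℝ) (hP : P.PosDef)
    (hQUQ : IsUnit (Qᵀ * (Jᵀ * P * J) * Q).det)
    (hQpQp : IsUnit (Qpᵀ * Qp).det)
    (hQpDQp : IsUnit (Qpᵀ * Dp * Qp).det) :
    Matrix.trace ((Qpᵀ * Dp * Qp)⁻¹)
      ≤ Matrix.trace ((Qᵀ * (Jᵀ * P * J) * Q)⁻¹ * (Qᵀ * (Jᵀ * P * P * J) * Q)
          * (Qᵀ * (Jᵀ * P * J) * Q)⁻¹) ∧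
    lmax ((Qpᵀ * Qp)⁻¹)
      ≤ lmax ((Qᵀ * (Jᵀ * P * J) * Q)⁻¹ * (Qᵀ * ((Jᵀ * P * J) * (Jᵀ * P * J)) * Q)
          * (Qᵀ * (Jᵀ * P * J) * Q)⁻¹) :=
  loss_lower_bounds_general N n p q Q J e hsupp Jp hJp Qp hQp Dp hDp P hP hQUQ
end

section
/- Let D be a q×q real symmetric positive definite matrix and R a q×p real matrix such that RᵀR and RᵀDR are invertible. Then (RᵀR)⁻¹RᵀD⁻¹R(RᵀR)⁻¹ − (RᵀDR)⁻¹ is positive semidefinite; in particular tr[(RᵀR)⁻¹RᵀD⁻¹R(RᵀR)⁻¹] ≥ tr[(RᵀDR)⁻¹]. -/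
open Matrix

/-!
If `Aᴴ R = 1` and `W = (Rᴴ D R)⁻¹`, then expanding `(D⁻¹ A - R W)ᴴ D (D⁻¹ A - R W)` gives
`Aᴴ D⁻¹ A - W - W + W`, so `Aᴴ D⁻¹ A - W` is a congruence transform of `D`, hence positive
semidefinite. The theorem is the case `A = R (Rᵀ R)⁻¹`.
-/

namespace Matrix.PosDef

variable {n m K : Type*} [Fintype n] [DecidableEq n] [Fintype m] [DecidableEq m]
  [Field K] [PartialOrder K] [StarRing K] {D : Matrix n n K}

theorem posSemidef_conjTranspose_mul_inv_mul_sub_inv (hD : D.PosDef) {R A : Matrix n m K}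
    (hAR : Aᴴ * R = 1) (hRDR : IsUnit (Rᴴ * D * R).det) :
    (Aᴴ * D⁻¹ * A - (Rᴴ * D * R)⁻¹).PosSemidef := by
  set W := (Rᴴ * D * R)⁻¹
  have hW : Wᴴ = W := (isHermitian_conjTranspose_mul_mul R hD.1).inv
  have hD' : IsUnit D.det := (isUnit_iff_isUnit_det D).mp hD.isUnit
  have hRA : Rᴴ * A = 1 := by simpa using congrArg (·ᴴ) hAR
  have hARW : Aᴴ * (R * W) = W := by rw [← Matrix.mul_assoc, hAR, Matrix.one_mul]
  have hWRDRW : W * (Rᴴ * (D * (R * W))) = W := by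
    rw [← Matrix.mul_assoc D, ← Matrix.mul_assoc Rᴴ, ← Matrix.mul_assoc Rᴴ D R]
    exact nonsing_inv_mul_cancel_left _ W hRDR
  have key : (D⁻¹ * A - R * W)ᴴ * D * (D⁻¹ * A - R * W) = Aᴴ * D⁻¹ * A - W := by
    simp only [conjTranspose_sub, conjTranspose_mul, hD.1.inv.eq, hW, Matrix.sub_mul,
      Matrix.mul_sub, Matrix.mul_assoc, mul_nonsing_inv_cancel_left _ _ hD',
      nonsing_inv_mul_cancel_left _ _ hD', hRA, hARW, hWRDRW, Matrix.mul_one]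
    abel
  rw [← key]
  exact hD.posSemidef.conjTranspose_mul_mul_same _

theorem posSemidef_inv_mul_mul_inv_sub_inv (hD : D.PosDef) {R : Matrix n m K}
    (hRR : IsUnit (Rᴴ * R).det) (hRDR : IsUnit (Rᴴ * D * R).det) :
    ((Rᴴ * R)⁻¹ * (Rᴴ * D⁻¹ * R) * (Rᴴ * R)⁻¹ - (Rᴴ * D * R)⁻¹).PosSemidef := by
  have hA : (R * (Rᴴ * R)⁻¹)ᴴ = (Rᴴ * R)⁻¹ * Rᴴ := by
    rw [conjTranspose_mul, (isHermitian_conjTranspose_mul_self R).inv.eq]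
  have hAR : (R * (Rᴴ * R)⁻¹)ᴴ * R = 1 := by
    rw [hA, Matrix.mul_assoc, nonsing_inv_mul _ hRR]
  have h := hD.posSemidef_conjTranspose_mul_inv_mul_sub_inv hAR hRDR
  rwa [hA, ← Matrix.mul_assoc, Matrix.mul_assoc _ Rᴴ, Matrix.mul_assoc (Rᴴ * R)⁻¹] at h

end Matrix.PosDef

/-- For `D ≻ 0` and `R : q × p` with `RᵀR`, `RᵀDR` invertible,
`(RᵀR)⁻¹RᵀD⁻¹R(RᵀR)⁻¹ − (RᵀDR)⁻¹` is psd, and in particular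
`tr[(RᵀR)⁻¹RᵀD⁻¹R(RᵀR)⁻¹] ≥ tr[(RᵀDR)⁻¹]`. -/
theorem variance_component_bound (q p : ℕ)
    (D : Matrix (Fin q) (Fin q) ℝ) (hD : D.PosDef)
    (R : Matrix (Fin q) (Fin p) ℝ)
    (hRR : IsUnit (Rᵀ * R).det) (hRDR : IsUnit (Rᵀ * D * R).det) :
    ((Rᵀ * R)⁻¹ * (Rᵀ * D⁻¹ * R) * (Rᵀ * R)⁻¹ - (Rᵀ * D * R)⁻¹).PosSemidef ∧
    Matrix.trace ((Rᵀ * D * R)⁻¹)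
      ≤ Matrix.trace ((Rᵀ * R)⁻¹ * (Rᵀ * D⁻¹ * R) * (Rᵀ * R)⁻¹) := by
  rw [← conjTranspose_eq_transpose_of_trivial] at hRR hRDR ⊢
  have h := hD.posSemidef_inv_mul_mul_inv_sub_inv hRR hRDR
  refine ⟨h, ?_⟩
  simpa [trace_sub] using h.trace_nonneg
end

section
/- In the design setup, assume Q₊ᵀQ₊ and Q₊ᵀD₊Q₊ are invertible and that neither of the following holds: (Q-inverse) (Q₊ᵀQ₊)⁻¹(Q₊ᵀD₊⁻¹Q₊)(Q₊ᵀQ₊)⁻¹ = (Q₊ᵀD₊Q₊)⁻¹, nor (Q-square) λmax[(Q₊ᵀD₊Q₊)⁻¹(Q₊ᵀD₊²Q₊)(Q₊ᵀD₊Q₊)⁻¹] = λmax[(Q₊ᵀQ₊)⁻¹]. Then there exists ε₀ > 0 such that for every ε ∈ (0, ε₀], both Δ₀(ε) := I₀(ξ,P_ε) − I₀(ξ,I_n) > 0 and Δ₁(ε) := I₁(ξ,I_n) − I₁(ξ,P_ε) > 0, where P_ε = (P₀ + ε·I_n)/(1+ε). -/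
open Matrix

/-!
Since `J` vanishes outside the columns `e`, both criteria only see the restricted design
`J₊ = J.submatrix id e`, `Q₊ = Q.submatrix e id`, and there `J₊ᵀ P₀ J₊ = α • 1` and
`J₊ᵀ P₀² J₊ = α² • D₊⁻¹`. Hence at `ε = 0` the criteria are `tr[G⁻¹ (Q₊ᵀ D₊⁻¹ Q₊) G⁻¹]` and
`λmax[G⁻¹]` with `G = Q₊ᵀ Q₊`, while at `P = I` they are `tr[S⁻¹]` and
`λmax[S⁻¹ (Q₊ᵀ D₊² Q₊) S⁻¹]` with `S = Q₊ᵀ D₊ Q₊`. Both differences have the form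
`(U - V)ᵀ M (U - V)` with `Vᵀ M (U - V) = 0`, so they are positive semidefinite; the failure of
(Q-inverse) and (Q-square) makes the comparisons strict, and continuity of the criteria in `ε`
(only upper semicontinuity for `λmax`) carries the strict inequalities to small `ε > 0`.
-/

namespace Matrix.IsHermitian
variable {n : Type*} [Fintype n] [DecidableEq n] {A : Matrix n n ℝ}

theorem posSemidef_smul_one_sub (hA : A.IsHermitian) {c : ℝ} (hc : ∀ i, hA.eigenvalues i ≤ c) :
    (c • 1 - A).PosSemidef := by
  set U : Matrix n n ℝ := (hA.eigenvectorUnitary : Matrix n n ℝ)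
  have hU : U * Uᴴ = 1 := Unitary.coe_mul_star_self _
  have hdiag : diagonal (fun i => c - hA.eigenvalues i) = c • 1 - diagonal hA.eigenvalues := by
    ext i j; by_cases h : i = j <;> simp [h]
  have hdecomp : c • 1 - A = U * diagonal (fun i => c - hA.eigenvalues i) * Uᴴ := by
    conv_lhs => rw [hA.spectral_theorem]
    rw [Unitary.conjStarAlgAut_apply, hdiag, mul_sub, sub_mul, Matrix.mul_smul, Matrix.smul_mul,
      Matrix.mul_one, hU]
    rfl
  rw [hdecomp]
  exact (PosSemidef.diagonal fun i => sub_nonneg.mpr (hc i)).mul_mul_conjTranspose_same U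

theorem eigenvalues_le_sum_abs (hA : A.IsHermitian) (i : n) :
    hA.eigenvalues i ≤ ∑ k, ∑ j, |A k j| := by
  have hi : Module.End.HasEigenvalue (toLin' A) (hA.eigenvalues i) := by
    rw [Module.End.hasEigenvalue_iff_mem_spectrum, Matrix.spectrum_toLin']
    exact hA.eigenvalues_mem_spectrum_real i
  obtain ⟨k, hk⟩ := eigenvalue_mem_ball hi
  simp only [Metric.mem_closedBall, Real.dist_eq, Real.norm_eq_abs] at hk
  calc hA.eigenvalues i ≤ |A k k| + ∑ j ∈ Finset.univ.erase k, |A k j| := by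
        linarith [le_abs_self (hA.eigenvalues i - A k k), le_abs_self (A k k)]
    _ = ∑ j, |A k j| := Finset.add_sum_erase _ (fun j => |A k j|) (Finset.mem_univ k)
    _ ≤ ∑ k, ∑ j, |A k j| :=
        Finset.single_le_sum (f := fun k => ∑ j, |A k j|)
          (fun k _ => Finset.sum_nonneg fun j _ => abs_nonneg _) (Finset.mem_univ k)

end Matrix.IsHermitian

theorem Matrix.PosSemidef.le_of_mulVec_eq_smul {n : Type*} [Fintype n] [DecidableEq n]
    {A : Matrix n n ℝ} {c r : ℝ} (h : (c • 1 - A).PosSemidef) {v : n → ℝ} (hv : v ≠ 0)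
    (hAv : A *ᵥ v = r • v) : r ≤ c := by
  have hvv : 0 < v ⬝ᵥ v := by simpa using dotProduct_star_self_pos_iff.mpr hv
  have := h.dotProduct_mulVec_nonneg v
  rw [star_trivial, sub_mulVec, hAv, smul_mulVec, one_mulVec, dotProduct_sub, dotProduct_smul,
    dotProduct_smul, smul_eq_mul, smul_eq_mul, ← sub_mul] at this
  exact sub_nonneg.mp (nonneg_of_mul_nonneg_left this hvv)

section Lmax
variable {m : ℕ} [NeZero m] {A B : Matrix (Fin m) (Fin m) ℝ}

theorem Matrix.IsHermitian.lmax_eq_sup'_eigenvalues (hA : A.IsHermitian) :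
    lmax A = Finset.univ.sup' Finset.univ_nonempty hA.eigenvalues := by
  set M := Finset.univ.sup' Finset.univ_nonempty hA.eigenvalues
  obtain ⟨i, -, hi⟩ := Finset.exists_mem_eq_sup' Finset.univ_nonempty hA.eigenvalues
  have hpsd := hA.posSemidef_smul_one_sub (c := M) fun j =>
    Finset.le_sup' hA.eigenvalues (Finset.mem_univ j)
  refine IsGreatest.csSup_eq ⟨⟨_, ?_, hi ▸ hA.mulVec_eigenvectorBasis i⟩, ?_⟩
  · exact (WithLp.ofLp_eq_zero 2).ne.2 <| hA.eigenvectorBasis.orthonormal.ne_zero i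
  · rintro r ⟨v, hv, hAv⟩
    exact hpsd.le_of_mulVec_eq_smul hv hAv

theorem Matrix.IsHermitian.lmax_le_iff (hA : A.IsHermitian) {c : ℝ} :
    lmax A ≤ c ↔ (c • 1 - A).PosSemidef := by
  rw [hA.lmax_eq_sup'_eigenvalues, Finset.sup'_le_iff]
  refine ⟨fun h => hA.posSemidef_smul_one_sub fun i => h i (Finset.mem_univ i),
    fun h i _ => h.le_of_mulVec_eq_smul ?_ (hA.mulVec_eigenvectorBasis i)⟩
  exact (WithLp.ofLp_eq_zero 2).ne.2 <| hA.eigenvectorBasis.orthonormal.ne_zero i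

theorem lmax_mono_s17 (hA : A.IsHermitian) (hB : B.IsHermitian) (h : (B - A).PosSemidef) :
    lmax A ≤ lmax B :=
  hA.lmax_le_iff.mpr (sub_add_sub_cancel (lmax B • 1) B A ▸ (hB.lmax_le_iff.mp le_rfl).add h)

theorem lmax_add_le (hA : A.IsHermitian) (hB : B.IsHermitian) :
    lmax (A + B) ≤ lmax A + lmax B := by
  refine (hA.add hB).lmax_le_iff.mpr ?_
  rw [show (lmax A + lmax B) • (1 : Matrix (Fin m) (Fin m) ℝ) - (A + B)
      = (lmax A • 1 - A) + (lmax B • 1 - B) by rw [add_smul]; abel]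
  exact (hA.lmax_le_iff.mp le_rfl).add (hB.lmax_le_iff.mp le_rfl)

theorem Matrix.IsHermitian.lmax_le_sum_abs (hA : A.IsHermitian) :
    lmax A ≤ ∑ i, ∑ j, |A i j| :=
  hA.lmax_le_iff.mpr (hA.posSemidef_smul_one_sub hA.eigenvalues_le_sum_abs)

theorem eventually_lmax_lt {ι : Type*} {l : Filter ι} {M : ι → Matrix (Fin m) (Fin m) ℝ}
    (hM : ∀ i, (M i).IsHermitian) (hA : A.IsHermitian) (hlim : Filter.Tendsto M l (nhds A))
    {c : ℝ} (h : lmax A < c) : ∀ᶠ i in l, lmax (M i) < c := by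
  have hdist : Filter.Tendsto (fun i => ∑ k, ∑ j, |(M i - A) k j|) l (nhds 0) := by
    have hcont : Continuous fun B : Matrix (Fin m) (Fin m) ℝ => ∑ k, ∑ j, |(B - A) k j| := by
      fun_prop
    simpa [Function.comp_def] using (hcont.tendsto A).comp hlim
  filter_upwards [hdist.eventually (gt_mem_nhds (sub_pos.mpr h))] with i hi
  calc lmax (M i) = lmax (A + (M i - A)) := by rw [add_sub_cancel]
    _ ≤ lmax A + lmax (M i - A) := lmax_add_le hA ((hM i).sub hA)
    _ ≤ lmax A + ∑ k, ∑ j, |(M i - A) k j| := add_le_add_right ((hM i).sub hA).lmax_le_sum_abs _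
    _ < c := by linarith

end Lmax

theorem Matrix.transpose_mul_mul_sub_eq_sub {R m n : Type*} [CommRing R] [Fintype m]
    {M : Matrix m m R} (hM : Mᵀ = M) {U V : Matrix m n R} (h : Vᵀ * M * U = Vᵀ * M * V) :
    (U - V)ᵀ * M * (U - V) = Uᵀ * M * U - Vᵀ * M * V := by
  have h' : Uᵀ * M * V = Vᵀ * M * V := by
    simpa [transpose_mul, hM, Matrix.mul_assoc] using congrArg transpose h
  rw [transpose_sub, Matrix.sub_mul, Matrix.sub_mul, Matrix.mul_sub, Matrix.mul_sub, h, h']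
  abel

section Gram
variable {m n : Type*} [Fintype m] [Fintype n] [DecidableEq m] [DecidableEq n]
  {Q : Matrix m n ℝ} {D : Matrix m m ℝ}

theorem posSemidef_sub_inv_of_inv_weight (hD : D.PosDef) (hG : IsUnit (Qᵀ * Q).det)
    (hS : IsUnit (Qᵀ * D * Q).det) :
    ((Qᵀ * Q)⁻¹ * (Qᵀ * D⁻¹ * Q) * (Qᵀ * Q)⁻¹ - (Qᵀ * D * Q)⁻¹).PosSemidef := by
  have hDt : Dᵀ = D := by simpa using hD.isHermitian.eq
  have hDi : IsUnit D.det := (isUnit_iff_isUnit_det D).mp hD.isUnit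
  have hDit : (D⁻¹)ᵀ = D⁻¹ := by rw [transpose_nonsing_inv, hDt]
  have hGt : ((Qᵀ * Q)⁻¹)ᵀ = (Qᵀ * Q)⁻¹ := by simp [transpose_nonsing_inv, transpose_mul]
  have hSt : ((Qᵀ * D * Q)⁻¹)ᵀ = (Qᵀ * D * Q)⁻¹ := by
    simp [transpose_nonsing_inv, transpose_mul, hDt, Matrix.mul_assoc]
  set G := Qᵀ * Q
  set S := Qᵀ * D * Q
  have hDD : D * D⁻¹ = 1 := mul_nonsing_inv D hDi
  have hGG : (Qᵀ * Q) * G⁻¹ = 1 := mul_nonsing_inv G hG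
  have hSS : S⁻¹ * (Qᵀ * D * Q) = 1 := nonsing_inv_mul S hS
  have hVU : (Q * S⁻¹)ᵀ * D * (D⁻¹ * Q * G⁻¹) = S⁻¹ := by
    simp only [transpose_mul, hSt]
    calc _ = S⁻¹ * (Qᵀ * (D * D⁻¹) * Q * G⁻¹) := by simp only [Matrix.mul_assoc]
      _ = S⁻¹ := by rw [hDD, Matrix.mul_one, hGG, Matrix.mul_one]
  have hVV : (Q * S⁻¹)ᵀ * D * (Q * S⁻¹) = S⁻¹ := by
    simp only [transpose_mul, hSt]
    calc _ = S⁻¹ * (Qᵀ * D * Q) * S⁻¹ := by simp only [Matrix.mul_assoc]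
      _ = S⁻¹ := by rw [hSS, Matrix.one_mul]
  have hUU : (D⁻¹ * Q * G⁻¹)ᵀ * D * (D⁻¹ * Q * G⁻¹) = G⁻¹ * (Qᵀ * D⁻¹ * Q) * G⁻¹ := by
    simp only [transpose_mul, hGt, hDit]
    calc _ = G⁻¹ * Qᵀ * D⁻¹ * (D * D⁻¹) * Q * G⁻¹ := by simp only [Matrix.mul_assoc]
      _ = _ := by rw [hDD, Matrix.mul_one]; simp only [Matrix.mul_assoc]
  rw [← hUU, ← hVV, ← transpose_mul_mul_sub_eq_sub hDt (hVU.trans hVV.symm)]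
  simpa using hD.posSemidef.conjTranspose_mul_mul_same (D⁻¹ * Q * G⁻¹ - Q * S⁻¹)

theorem posSemidef_sub_inv_of_sq_weight (hD : Dᵀ = D) (hG : IsUnit (Qᵀ * Q).det)
    (hS : IsUnit (Qᵀ * D * Q).det) :
    ((Qᵀ * D * Q)⁻¹ * (Qᵀ * (D * D) * Q) * (Qᵀ * D * Q)⁻¹ - (Qᵀ * Q)⁻¹).PosSemidef := by
  have hGt : ((Qᵀ * Q)⁻¹)ᵀ = (Qᵀ * Q)⁻¹ := by simp [transpose_nonsing_inv, transpose_mul]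
  have hSt : ((Qᵀ * D * Q)⁻¹)ᵀ = (Qᵀ * D * Q)⁻¹ := by
    simp [transpose_nonsing_inv, transpose_mul, hD, Matrix.mul_assoc]
  set G := Qᵀ * Q
  set S := Qᵀ * D * Q
  have hGG : G⁻¹ * (Qᵀ * Q) = 1 := nonsing_inv_mul G hG
  have hSS : (Qᵀ * D * Q) * S⁻¹ = 1 := mul_nonsing_inv S hS
  have hVU : (Q * G⁻¹)ᵀ * (1 : Matrix m m ℝ) * (D * Q * S⁻¹) = G⁻¹ := by
    simp only [transpose_mul, hGt, Matrix.mul_one]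
    calc _ = G⁻¹ * (Qᵀ * D * Q * S⁻¹) := by simp only [Matrix.mul_assoc]
      _ = G⁻¹ := by rw [hSS, Matrix.mul_one]
  have hVV : (Q * G⁻¹)ᵀ * (1 : Matrix m m ℝ) * (Q * G⁻¹) = G⁻¹ := by
    simp only [transpose_mul, hGt, Matrix.mul_one]
    calc _ = G⁻¹ * (Qᵀ * Q) * G⁻¹ := by simp only [Matrix.mul_assoc]
      _ = G⁻¹ := by rw [hGG, Matrix.one_mul]
  have hUU : (D * Q * S⁻¹)ᵀ * (1 : Matrix m m ℝ) * (D * Q * S⁻¹) =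
      S⁻¹ * (Qᵀ * (D * D) * Q) * S⁻¹ := by
    simp only [transpose_mul, hSt, hD, Matrix.mul_one, Matrix.mul_assoc]
  rw [← hUU, ← hVV, ← transpose_mul_mul_sub_eq_sub transpose_one (hVU.trans hVV.symm),
    Matrix.mul_one]
  simpa using posSemidef_conjTranspose_mul_self (D * Q * S⁻¹ - Q * G⁻¹)

theorem trace_inv_lt_of_inv_weight (hD : D.PosDef) (hG : IsUnit (Qᵀ * Q).det)
    (hS : IsUnit (Qᵀ * D * Q).det)
    (hne : (Qᵀ * Q)⁻¹ * (Qᵀ * D⁻¹ * Q) * (Qᵀ * Q)⁻¹ ≠ (Qᵀ * D * Q)⁻¹) :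
    trace (Qᵀ * D * Q)⁻¹ < trace ((Qᵀ * Q)⁻¹ * (Qᵀ * D⁻¹ * Q) * (Qᵀ * Q)⁻¹) := by
  have h := posSemidef_sub_inv_of_inv_weight hD hG hS
  rw [← sub_pos, ← trace_sub]
  exact h.trace_nonneg.lt_of_ne fun h0 => hne (sub_eq_zero.mp (h.trace_eq_zero_iff.mp h0.symm))

end Gram

theorem lmax_inv_lt_of_sq_weight {k : Type*} [Fintype k] [DecidableEq k] {p : ℕ} [NeZero p]
    {Q : Matrix k (Fin p) ℝ} {D : Matrix k k ℝ} (hD : Dᵀ = D) (hG : IsUnit (Qᵀ * Q).det)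
    (hS : IsUnit (Qᵀ * D * Q).det)
    (hne : lmax ((Qᵀ * D * Q)⁻¹ * (Qᵀ * (D * D) * Q) * (Qᵀ * D * Q)⁻¹) ≠ lmax (Qᵀ * Q)⁻¹) :
    lmax (Qᵀ * Q)⁻¹ < lmax ((Qᵀ * D * Q)⁻¹ * (Qᵀ * (D * D) * Q) * (Qᵀ * D * Q)⁻¹) := by
  have h := posSemidef_sub_inv_of_sq_weight hD hG hS
  have hGi : ((Qᵀ * Q)⁻¹).IsHermitian := by simpa using (isHermitian_conjTranspose_mul_self Q).inv
  exact (lmax_mono_s17 hGi (by simpa using h.isHermitian.add hGi) h).lt_of_ne hne.symm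

theorem ContinuousAt.matrix_inv_mul_mul_inv {X K n : Type*} [TopologicalSpace X] [Field K]
    [TopologicalSpace K] [IsTopologicalDivisionRing K] [Fintype n] [DecidableEq n]
    {A B : X → Matrix n n K} {x : X} (hA : ContinuousAt A x) (hB : ContinuousAt B x)
    (hdet : IsUnit (A x).det) : ContinuousAt (fun y => (A y)⁻¹ * B y * (A y)⁻¹) x := by
  have hinv : ContinuousAt (fun y => (A y)⁻¹) x := by
    refine (continuousAt_matrix_inv _ ?_).comp hA
    rw [Ring.inverse_eq_inv']
    exact continuousAt_inv₀ hdet.ne_zero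
  exact (hinv.mul hB).mul hinv

theorem Matrix.inv_smul_mul_smul_mul_inv_smul {K n : Type*} [Field K] [Fintype n] [DecidableEq n]
    {A : Matrix n n K} (hA : IsUnit A.det) (B : Matrix n n K) {c : K} (hc : c ≠ 0) :
    (c • A)⁻¹ * ((c * c) • B) * (c • A)⁻¹ = A⁻¹ * B * A⁻¹ := by
  have : Invertible c := invertibleOfNonzero hc
  rw [Matrix.inv_smul A c hA, invOf_eq_inv]
  simp only [Matrix.smul_mul, Matrix.mul_smul, smul_smul]
  rw [show c⁻¹ * (c * c * c⁻¹) = 1 by field_simp, one_smul]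

theorem Matrix.mul_eq_submatrix_mul_submatrix_s17 {R l n m k : Type*} [NonUnitalNonAssocSemiring R]
    [Fintype n] [Fintype k] {J : Matrix l n R} (e : k ↪ n)
    (hsupp : ∀ j, j ∉ Set.range e → ∀ i, J i j = 0) (A : Matrix n m R) :
    J * A = J.submatrix id e * A.submatrix e id := by
  ext i j
  rw [mul_apply, mul_apply, ← Finset.sum_subset (Finset.subset_univ (Finset.univ.map e)),
    Finset.sum_map]
  · rfl
  · intro x _ hx
    rw [hsupp x (by simpa using hx) i, zero_mul]

theorem Matrix.posDef_transpose_mul_self_submatrix {l n k : Type*} [Fintype l] [Fintype k]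
    [DecidableEq n] {J : Matrix l n ℝ} (e : k ↪ n)
    (hrow : ∀ i, ∃ j₀, ∀ j, J i j = if j = j₀ then (1 : ℝ) else 0)
    (hcol : ∀ c, ∃ i, J i (e c) = 1) :
    ((J.submatrix id e)ᵀ * J.submatrix id e).PosDef := by
  classical
  refine PosDef.conjTranspose_mul_self _ fun v w h => funext fun c => ?_
  obtain ⟨i, hi⟩ := hcol c
  obtain ⟨j₀, hj₀⟩ := hrow i
  have hc : e c = j₀ := by
    by_contra hne
    simp [hj₀, hne] at hi
  have hsel : ∀ u : k → ℝ, (J.submatrix id e *ᵥ u) i = u c := by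
    intro u
    simp [mulVec, dotProduct, hj₀, ← hc, e.injective.eq_iff]
  rw [← hsel v, ← hsel w]
  exact congrFun h i

section Design
variable {l N k p : Type*} [Fintype l] [Fintype N] [Fintype k]

theorem transpose_mul_transpose_mul_mul_eq {J : Matrix l N ℝ} {Q : Matrix N p ℝ}
    {Jp : Matrix l k ℝ} {Qp : Matrix k p ℝ} (h : J * Q = Jp * Qp) (X : Matrix l l ℝ) :
    Qᵀ * (Jᵀ * X * J) * Q = Qpᵀ * (Jpᵀ * X * Jp) * Qp := by
  calc _ = (J * Q)ᵀ * X * (J * Q) := by simp only [transpose_mul, Matrix.mul_assoc]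
    _ = _ := by rw [h]; simp only [transpose_mul, Matrix.mul_assoc]

variable [Fintype p] [DecidableEq p]

noncomputable def I0Matrix (Q : Matrix N p ℝ) (J : Matrix l N ℝ) (P : Matrix l l ℝ) :
    Matrix p p ℝ :=
  (Qᵀ * (Jᵀ * P * J) * Q)⁻¹ * (Qᵀ * (Jᵀ * P * P * J) * Q) * (Qᵀ * (Jᵀ * P * J) * Q)⁻¹

noncomputable def I1Matrix (Q : Matrix N p ℝ) (J : Matrix l N ℝ) (P : Matrix l l ℝ) :
    Matrix p p ℝ :=
  (Qᵀ * (Jᵀ * P * J) * Q)⁻¹ * (Qᵀ * ((Jᵀ * P * J) * (Jᵀ * P * J)) * Q) *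
    (Qᵀ * (Jᵀ * P * J) * Q)⁻¹

variable {J : Matrix l N ℝ} {Q : Matrix N p ℝ}

theorem I0Matrix_eq_submatrix (e : k ↪ N) (hsupp : ∀ j, j ∉ Set.range e → ∀ i, J i j = 0) :
    I0Matrix Q J = I0Matrix (Q.submatrix e id) (J.submatrix id e) := by
  funext P
  simp only [I0Matrix]
  rw [Matrix.mul_assoc Jᵀ P P, Matrix.mul_assoc (J.submatrix id e)ᵀ P P]
  simp only [transpose_mul_transpose_mul_mul_eq (J.mul_eq_submatrix_mul_submatrix_s17 e hsupp Q)]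

theorem I1Matrix_eq_submatrix (e : k ↪ N) (hsupp : ∀ j, j ∉ Set.range e → ∀ i, J i j = 0) :
    I1Matrix Q J = I1Matrix (Q.submatrix e id) (J.submatrix id e) := by
  funext P
  have hJQ := J.mul_eq_submatrix_mul_submatrix_s17 e hsupp Q
  have hJJ := J.mul_eq_submatrix_mul_submatrix_s17 e hsupp Jᵀ
  rw [← transpose_submatrix] at hJJ
  set Jp := J.submatrix id e
  have hsqJ : Jᵀ * P * J * (Jᵀ * P * J) = Jᵀ * (P * (J * Jᵀ) * P) * J := by
    simp only [Matrix.mul_assoc]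
  have hsqJp : Jpᵀ * P * Jp * (Jpᵀ * P * Jp) = Jpᵀ * (P * (Jp * Jpᵀ) * P) * Jp := by
    simp only [Matrix.mul_assoc]
  simp only [I1Matrix, hsqJ, hsqJp, hJJ, transpose_mul_transpose_mul_mul_eq hJQ]

theorem I0Matrix_one [DecidableEq l] (h : IsUnit (Qᵀ * (Jᵀ * J) * Q).det) :
    I0Matrix Q J 1 = (Qᵀ * (Jᵀ * J) * Q)⁻¹ := by
  simp only [I0Matrix, Matrix.mul_one, nonsing_inv_mul _ h, Matrix.one_mul]

theorem continuousAt_I0Matrix {P : Matrix l l ℝ} (h : IsUnit (Qᵀ * (Jᵀ * P * J) * Q).det) :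
    ContinuousAt (I0Matrix Q J) P :=
  ContinuousAt.matrix_inv_mul_mul_inv (by fun_prop) (by fun_prop) h

theorem continuousAt_I1Matrix {P : Matrix l l ℝ} (h : IsUnit (Qᵀ * (Jᵀ * P * J) * Q).det) :
    ContinuousAt (I1Matrix Q J) P :=
  ContinuousAt.matrix_inv_mul_mul_inv (by fun_prop) (by fun_prop) h

theorem isHermitian_I1Matrix {P : Matrix l l ℝ} (hP : P.IsHermitian) :
    (I1Matrix Q J P).IsHermitian := by
  have hU : (Jᵀ * P * J).IsHermitian := by simpa using isHermitian_conjTranspose_mul_mul J hP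
  have hA : (Qᵀ * (Jᵀ * P * J) * Q).IsHermitian := by
    simpa using isHermitian_conjTranspose_mul_mul Q hU
  have hW : (Qᵀ * ((Jᵀ * P * J) * (Jᵀ * P * J)) * Q).IsHermitian := by
    convert isHermitian_conjTranspose_mul_self (Jᵀ * P * J * Q) using 1
    rw [conjTranspose_mul, hU.eq, conjTranspose_eq_transpose_of_trivial]
    simp only [Matrix.mul_assoc]
  have := isHermitian_mul_mul_conjTranspose (Qᵀ * (Jᵀ * P * J) * Q)⁻¹ hW
  rwa [hA.inv.eq] at this

end Design

section Weight
variable {l k p : Type*} [Fintype l] [Fintype k] [DecidableEq k]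
  {Jp : Matrix l k ℝ} {Qp : Matrix k p ℝ}

/-- The paper's `P₀ = α J₊ D₊⁻² J₊ᵀ` with `D₊ = J₊ᵀ J₊`; `weightPath α J₊ ε` below is `P_ε`. -/
noncomputable def weightMatrix (α : ℝ) (Jp : Matrix l k ℝ) : Matrix l l ℝ :=
  α • (Jp * ((Jpᵀ * Jp)⁻¹ * (Jpᵀ * Jp)⁻¹) * Jpᵀ)

theorem isHermitian_weightMatrix (α : ℝ) (Jp : Matrix l k ℝ) :
    (weightMatrix α Jp).IsHermitian := by
  have hDi : ((Jpᵀ * Jp)⁻¹).IsHermitian := by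
    simpa using (isHermitian_conjTranspose_mul_self Jp).inv
  have := isHermitian_mul_mul_conjTranspose Jp (hDi.pow 2)
  simpa [weightMatrix, sq] using this.smul (IsSelfAdjoint.all α)

theorem transpose_mul_weightMatrix_mul (hD : IsUnit (Jpᵀ * Jp).det) (α : ℝ) :
    Jpᵀ * weightMatrix α Jp * Jp = α • 1 := by
  calc _ = α • ((Jpᵀ * Jp) * (Jpᵀ * Jp)⁻¹ * ((Jpᵀ * Jp)⁻¹ * (Jpᵀ * Jp))) := by
        simp only [weightMatrix, Matrix.mul_smul, Matrix.smul_mul, Matrix.mul_assoc]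
    _ = α • 1 := by rw [mul_nonsing_inv _ hD, nonsing_inv_mul _ hD, Matrix.one_mul]

theorem transpose_mul_weightMatrix_sq_mul (hD : IsUnit (Jpᵀ * Jp).det) (α : ℝ) :
    Jpᵀ * weightMatrix α Jp * weightMatrix α Jp * Jp = (α * α) • (Jpᵀ * Jp)⁻¹ := by
  calc _ = (α * α) • ((Jpᵀ * Jp) * (Jpᵀ * Jp)⁻¹ * ((Jpᵀ * Jp)⁻¹ * (Jpᵀ * Jp)) *
        (Jpᵀ * Jp)⁻¹ * ((Jpᵀ * Jp)⁻¹ * (Jpᵀ * Jp))) := by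
        simp only [weightMatrix, Matrix.mul_smul, Matrix.smul_mul, smul_smul, Matrix.mul_assoc]
    _ = _ := by rw [mul_nonsing_inv _ hD, nonsing_inv_mul _ hD]; simp

theorem gram_weightMatrix (hD : IsUnit (Jpᵀ * Jp).det) (α : ℝ) :
    Qpᵀ * (Jpᵀ * weightMatrix α Jp * Jp) * Qp = α • (Qpᵀ * Qp) := by
  rw [transpose_mul_weightMatrix_mul hD, Matrix.mul_smul, Matrix.mul_one, Matrix.smul_mul]

variable [Fintype p] [DecidableEq p]

theorem I0Matrix_weightMatrix (hD : IsUnit (Jpᵀ * Jp).det) (hG : IsUnit (Qpᵀ * Qp).det)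
    {α : ℝ} (hα : α ≠ 0) :
    I0Matrix Qp Jp (weightMatrix α Jp) =
      (Qpᵀ * Qp)⁻¹ * (Qpᵀ * (Jpᵀ * Jp)⁻¹ * Qp) * (Qpᵀ * Qp)⁻¹ := by
  rw [I0Matrix, gram_weightMatrix hD, transpose_mul_weightMatrix_sq_mul hD, Matrix.mul_smul,
    Matrix.smul_mul, inv_smul_mul_smul_mul_inv_smul hG _ hα]

theorem I1Matrix_weightMatrix (hD : IsUnit (Jpᵀ * Jp).det) (hG : IsUnit (Qpᵀ * Qp).det)
    {α : ℝ} (hα : α ≠ 0) :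
    I1Matrix Qp Jp (weightMatrix α Jp) = (Qpᵀ * Qp)⁻¹ := by
  rw [I1Matrix, gram_weightMatrix hD, transpose_mul_weightMatrix_mul hD, smul_mul_smul_comm,
    Matrix.mul_one, Matrix.mul_smul, Matrix.smul_mul, Matrix.mul_one,
    inv_smul_mul_smul_mul_inv_smul hG _ hα, nonsing_inv_mul _ hG, Matrix.one_mul]

theorem isUnit_det_gram_weightMatrix (hD : IsUnit (Jpᵀ * Jp).det) (hG : IsUnit (Qpᵀ * Qp).det)
    {α : ℝ} (hα : α ≠ 0) : IsUnit (Qpᵀ * (Jpᵀ * weightMatrix α Jp * Jp) * Qp).det := by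
  rw [gram_weightMatrix hD, det_smul]
  exact (isUnit_iff_ne_zero.mpr (pow_ne_zero _ hα)).mul hG

variable [DecidableEq l]

noncomputable def weightPath (α : ℝ) (Jp : Matrix l k ℝ) (ε : ℝ) : Matrix l l ℝ :=
  (1 + ε)⁻¹ • (weightMatrix α Jp + ε • 1)

theorem tendsto_weightPath (α : ℝ) (Jp : Matrix l k ℝ) :
    Filter.Tendsto (weightPath α Jp) (nhds 0) (nhds (weightMatrix α Jp)) := by
  have : ContinuousAt (weightPath α Jp) 0 := by
    unfold weightPath; fun_prop (disch := norm_num)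
  simpa [weightPath] using this.tendsto

theorem isHermitian_weightPath (α : ℝ) (Jp : Matrix l k ℝ) (ε : ℝ) :
    (weightPath α Jp ε).IsHermitian :=
  ((isHermitian_weightMatrix α Jp).add (isHermitian_one.smul (IsSelfAdjoint.all ε))).smul
    (IsSelfAdjoint.all _)

theorem eventually_trace_I0Matrix_one_lt (hD : (Jpᵀ * Jp).PosDef) (hG : IsUnit (Qpᵀ * Qp).det)
    (hS : IsUnit (Qpᵀ * (Jpᵀ * Jp) * Qp).det) {α : ℝ} (hα : α ≠ 0)
    (hne : (Qpᵀ * Qp)⁻¹ * (Qpᵀ * (Jpᵀ * Jp)⁻¹ * Qp) * (Qpᵀ * Qp)⁻¹ ≠ (Qpᵀ * (Jpᵀ * Jp) * Qp)⁻¹) :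
    ∀ᶠ ε in nhds 0, trace (I0Matrix Qp Jp 1) < trace (I0Matrix Qp Jp (weightPath α Jp ε)) := by
  have hDu : IsUnit (Jpᵀ * Jp).det := (isUnit_iff_isUnit_det _).mp hD.isUnit
  have hlim := (continuousAt_I0Matrix (isUnit_det_gram_weightMatrix hDu hG hα)).tendsto.comp
    (tendsto_weightPath α Jp)
  refine ((continuous_id.matrix_trace.tendsto _).comp hlim).eventually (lt_mem_nhds ?_)
  rw [I0Matrix_one hS, I0Matrix_weightMatrix hDu hG hα]
  exact trace_inv_lt_of_inv_weight hD hG hS hne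

end Weight

theorem eventually_lmax_I1Matrix_lt_one {l k : Type*} [Fintype l] [Fintype k] [DecidableEq l]
    [DecidableEq k] {p : ℕ} [NeZero p] {Jp : Matrix l k ℝ} {Qp : Matrix k (Fin p) ℝ}
    (hD : (Jpᵀ * Jp).PosDef) (hG : IsUnit (Qpᵀ * Qp).det)
    (hS : IsUnit (Qpᵀ * (Jpᵀ * Jp) * Qp).det) {α : ℝ} (hα : α ≠ 0)
    (hne : lmax ((Qpᵀ * (Jpᵀ * Jp) * Qp)⁻¹ * (Qpᵀ * ((Jpᵀ * Jp) * (Jpᵀ * Jp)) * Qp) *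
      (Qpᵀ * (Jpᵀ * Jp) * Qp)⁻¹) ≠ lmax (Qpᵀ * Qp)⁻¹) :
    ∀ᶠ ε in nhds 0, lmax (I1Matrix Qp Jp (weightPath α Jp ε)) < lmax (I1Matrix Qp Jp 1) := by
  have hDu : IsUnit (Jpᵀ * Jp).det := (isUnit_iff_isUnit_det _).mp hD.isUnit
  refine eventually_lmax_lt (fun ε => isHermitian_I1Matrix (isHermitian_weightPath α Jp ε))
    (isHermitian_I1Matrix (isHermitian_weightMatrix α Jp))
    ((continuousAt_I1Matrix (isUnit_det_gram_weightMatrix hDu hG hα)).tendsto.comp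
      (tendsto_weightPath α Jp)) ?_
  rw [I1Matrix_weightMatrix hDu hG hα]
  simpa [I1Matrix] using lmax_inv_lt_of_sq_weight hD.isHermitian.eq hG hS hne

theorem delta_positive_near_zero_general (N n p q : ℕ) (hp : 0 < p) (hpq : p ≤ q)
    (Q : Matrix (Fin N) (Fin p) ℝ)
    (J : Matrix (Fin n) (Fin N) ℝ)
    (hJ : ∀ i, ∃ j₀, ∀ j, J i j = if j = j₀ then (1 : ℝ) else 0)
    (e : Fin q ↪ Fin N)
    (hsupp : ∀ j, j ∉ Set.range ⇑e → ∀ i, J i j = 0)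
    (hpos : ∀ k, ∃ i, J i (e k) = 1)
    (Jp : Matrix (Fin n) (Fin q) ℝ) (hJp : ∀ i k, Jp i k = J i (e k))
    (Qp : Matrix (Fin q) (Fin p) ℝ) (hQp : ∀ k j, Qp k j = Q (e k) j)
    (Dp : Matrix (Fin q) (Fin q) ℝ) (hDp : Dp = Jpᵀ * Jp)
    (hQpQp : IsUnit (Qpᵀ * Qp).det)
    (hQpDQp : IsUnit (Qpᵀ * Dp * Qp).det)
    (α : ℝ) (hα : α = (n : ℝ) / Matrix.trace Dp⁻¹)
    (P₀ : Matrix (Fin n) (Fin n) ℝ) (hP₀ : P₀ = α • (Jp * (Dp⁻¹ * Dp⁻¹) * Jpᵀ))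
    (I0f I1f : Matrix (Fin n) (Fin n) ℝ → ℝ)
    (hI0f : ∀ P : Matrix (Fin n) (Fin n) ℝ, I0f P =
      Matrix.trace ((Qᵀ * (Jᵀ * P * J) * Q)⁻¹ * (Qᵀ * (Jᵀ * P * P * J) * Q)
        * (Qᵀ * (Jᵀ * P * J) * Q)⁻¹))
    (hI1f : ∀ P : Matrix (Fin n) (Fin n) ℝ, I1f P =
      lmax ((Qᵀ * (Jᵀ * P * J) * Q)⁻¹ * (Qᵀ * ((Jᵀ * P * J) * (Jᵀ * P * J)) * Q)
        * (Qᵀ * (Jᵀ * P * J) * Q)⁻¹))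
    (hQinv : ¬((Qpᵀ * Qp)⁻¹ * (Qpᵀ * Dp⁻¹ * Qp) * (Qpᵀ * Qp)⁻¹ = (Qpᵀ * Dp * Qp)⁻¹))
    (hQsq : ¬(lmax ((Qpᵀ * Dp * Qp)⁻¹ * (Qpᵀ * (Dp * Dp) * Qp) * (Qpᵀ * Dp * Qp)⁻¹)
      = lmax ((Qpᵀ * Qp)⁻¹))) :
    ∃ ε₀ : ℝ, 0 < ε₀ ∧ ∀ ε : ℝ, 0 < ε → ε ≤ ε₀ →
      0 < I0f ((1 + ε)⁻¹ • (P₀ + ε • (1 : Matrix (Fin n) (Fin n) ℝ))) - I0f 1 ∧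
      0 < I1f 1 - I1f ((1 + ε)⁻¹ • (P₀ + ε • (1 : Matrix (Fin n) (Fin n) ℝ))) := by
  subst hDp
  have : NeZero p := ⟨hp.ne'⟩
  have hq : 0 < q := hp.trans_le hpq
  have hJp' : Jp = J.submatrix id e := Matrix.ext hJp
  have hQp' : Qp = Q.submatrix e id := Matrix.ext hQp
  have hI0 : ∀ P, I0f P = trace (I0Matrix Qp Jp P) := by
    rw [hJp', hQp', ← I0Matrix_eq_submatrix e hsupp]; exact hI0f
  have hI1 : ∀ P, I1f P = lmax (I1Matrix Qp Jp P) := by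
    rw [hJp', hQp', ← I1Matrix_eq_submatrix e hsupp]; exact hI1f
  have hD : (Jpᵀ * Jp).PosDef := hJp' ▸ J.posDef_transpose_mul_self_submatrix e hJ hpos
  have hα0 : α ≠ 0 := by
    have : Nonempty (Fin q) := ⟨⟨0, hq⟩⟩
    rw [hα]
    exact div_ne_zero (Nat.cast_ne_zero.mpr (hpos ⟨0, hq⟩).choose.pos.ne') hD.inv.trace_pos.ne'
  have hP : ∀ ε : ℝ, (1 + ε)⁻¹ • (P₀ + ε • 1) = weightPath α Jp ε := fun ε => by
    rw [hP₀]; rfl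
  obtain ⟨ε₀, hε₀, hε⟩ := (nhds_basis_Icc_pos 0).eventually_iff.mp
    ((eventually_trace_I0Matrix_one_lt hD hQpQp hQpDQp hα0 hQinv).and
      (eventually_lmax_I1Matrix_lt_one hD hQpQp hQpDQp hα0 hQsq))
  refine ⟨ε₀, hε₀, fun ε hε0 hεle => ?_⟩
  obtain ⟨h0, h1⟩ := hε ⟨by linarith, by linarith⟩
  rw [hP, hI0, hI0, hI1, hI1]
  exact ⟨sub_pos.mpr h0, sub_pos.mpr h1⟩

/-- In the design setup, if neither (Q-inverse)
`(Q₊ᵀQ₊)⁻¹(Q₊ᵀD₊⁻¹Q₊)(Q₊ᵀQ₊)⁻¹ = (Q₊ᵀD₊Q₊)⁻¹` nor (Q-square)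
`λmax[(Q₊ᵀD₊Q₊)⁻¹(Q₊ᵀD₊²Q₊)(Q₊ᵀD₊Q₊)⁻¹] = λmax[(Q₊ᵀQ₊)⁻¹]` holds, then there
is `ε₀ > 0` such that for all `ε ∈ (0, ε₀]`, with `P_ε = (P₀ + ε·Iₙ)/(1+ε)`,
both `Δ₀(ε) = I₀(ξ,P_ε) − I₀(ξ,Iₙ) > 0` and `Δ₁(ε) = I₁(ξ,Iₙ) − I₁(ξ,P_ε) > 0`. -/
theorem delta_positive_near_zero (N n p q : ℕ) (hp : 0 < p) (hpq : p ≤ q)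
    (hqn : q ≤ n) (hqN : q ≤ N)
    (Q : Matrix (Fin N) (Fin p) ℝ) (hQ : Qᵀ * Q = 1)
    (J : Matrix (Fin n) (Fin N) ℝ)
    (hJ : ∀ i, ∃ j₀, ∀ j, J i j = if j = j₀ then (1 : ℝ) else 0)
    (e : Fin q ↪ Fin N)
    (hsupp : ∀ j, j ∉ Set.range ⇑e → ∀ i, J i j = 0)
    (hpos : ∀ k, ∃ i, J i (e k) = 1)
    (Jp : Matrix (Fin n) (Fin q) ℝ) (hJp : ∀ i k, Jp i k = J i (e k))
    (Qp : Matrix (Fin q) (Fin p) ℝ) (hQp : ∀ k j, Qp k j = Q (e k) j)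
    (Dp : Matrix (Fin q) (Fin q) ℝ) (hDp : Dp = Jpᵀ * Jp)
    (hQpQp : IsUnit (Qpᵀ * Qp).det)
    (hQpDQp : IsUnit (Qpᵀ * Dp * Qp).det)
    (α : ℝ) (hα : α = (n : ℝ) / Matrix.trace Dp⁻¹)
    (P₀ : Matrix (Fin n) (Fin n) ℝ) (hP₀ : P₀ = α • (Jp * (Dp⁻¹ * Dp⁻¹) * Jpᵀ))
    (I0f I1f : Matrix (Fin n) (Fin n) ℝ → ℝ)
    (hI0f : ∀ P : Matrix (Fin n) (Fin n) ℝ, I0f P =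
      Matrix.trace ((Qᵀ * (Jᵀ * P * J) * Q)⁻¹ * (Qᵀ * (Jᵀ * P * P * J) * Q)
        * (Qᵀ * (Jᵀ * P * J) * Q)⁻¹))
    (hI1f : ∀ P : Matrix (Fin n) (Fin n) ℝ, I1f P =
      lmax ((Qᵀ * (Jᵀ * P * J) * Q)⁻¹ * (Qᵀ * ((Jᵀ * P * J) * (Jᵀ * P * J)) * Q)
        * (Qᵀ * (Jᵀ * P * J) * Q)⁻¹))
    (hQinv : ¬((Qpᵀ * Qp)⁻¹ * (Qpᵀ * Dp⁻¹ * Qp) * (Qpᵀ * Qp)⁻¹ = (Qpᵀ * Dp * Qp)⁻¹))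
    (hQsq : ¬(lmax ((Qpᵀ * Dp * Qp)⁻¹ * (Qpᵀ * (Dp * Dp) * Qp) * (Qpᵀ * Dp * Qp)⁻¹)
      = lmax ((Qpᵀ * Qp)⁻¹))) :
    ∃ ε₀ : ℝ, 0 < ε₀ ∧ ∀ ε : ℝ, 0 < ε → ε ≤ ε₀ →
      0 < I0f ((1 + ε)⁻¹ • (P₀ + ε • (1 : Matrix (Fin n) (Fin n) ℝ))) - I0f 1 ∧
      0 < I1f 1 - I1f ((1 + ε)⁻¹ • (P₀ + ε • (1 : Matrix (Fin n) (Fin n) ℝ))) :=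
  delta_positive_near_zero_general N n p q hp hpq Q J hJ e hsupp hpos Jp hJp Qp hQp Dp hDp hQpQp
    hQpDQp α hα P₀ hP₀ I0f I1f hI0f hI1f hQinv hQsq
end
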